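/- arXiv:2207.09087 — 6 statements merged into one kernel-verified Lean document; each statement's English description precedes it below -/
import Mathlib

section
/- For all positive integers s, m with m ≥ 2 and every integer k with 1 ≤ k ≤ m−1, the ratio (Π_{i=1}^{k} C(is, s) · Π_{j=1}^{m−k} C(js, s)) / Π_{l=1}^{m} C(ls, s) is at most 1 / C(ms, s), and moreover C(ms, s) ≥ m^s, so the ratio is at most 1/m^s. -/
/-!
Since `C(is, s) · s! = (is)! / ((i-1)s)!`, the product `∏_{i ≤ k} C(is, s)` telescopes to
`(ks)! / (s!)^k`. Hence the ratio is exactly `1 / C(ms, ks)`, and as `s ≤ ks ≤ ms - s`,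
unimodality of `C(ms, ·)` gives `C(ms, s) ≤ C(ms, ks)`. Finally
`C(ms, s) = m · C(ms - 1, s - 1) ≥ m · C(m(s-1), s-1)`, which gives `C(ms, s) ≥ m^s` by induction.
-/

open Finset

namespace Nat

theorem choose_le_choose_of_le_of_two_mul_le {n a b : ℕ} (hab : a ≤ b) (hb : 2 * b ≤ n) :
    n.choose a ≤ n.choose b := by
  induction b, hab using Nat.le_induction with
  | base => exact le_rfl
  | succ b _ ih => exact (ih (by omega)).trans (choose_le_succ_of_lt_half_left (by omega))

theorem choose_le_choose_of_le_of_add_le {n a b : ℕ} (hab : a ≤ b) (hb : a + b ≤ n) :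
    n.choose a ≤ n.choose b := by
  rcases le_or_gt (2 * b) n with h | h
  · exact choose_le_choose_of_le_of_two_mul_le hab h
  · rw [← choose_symm (by omega : b ≤ n)]
    exact choose_le_choose_of_le_of_two_mul_le (by omega) (by omega)

theorem pow_le_choose_mul (m s : ℕ) : m ^ s ≤ (m * s).choose s := by
  induction s with
  | zero => simp
  | succ s ih =>
    have hle : m * s ≤ m * (s + 1) - 1 := by
      rcases m with _ | m
      · simp
      · rw [Nat.mul_succ]; omega
    calc m ^ (s + 1) = m * m ^ s := Nat.pow_succ'
      _ ≤ m * (m * (s + 1) - 1).choose s :=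
          Nat.mul_le_mul_left m (ih.trans (choose_le_choose s hle))
      _ = (m * (s + 1)).choose (s + 1) := (choose_mul_right s.succ_ne_zero).symm

theorem prod_Icc_choose_mul_mul_factorial_pow (s k : ℕ) :
    (∏ i ∈ Icc 1 k, (i * s).choose s) * s ! ^ k = (k * s)! := by
  induction k with
  | zero => simp
  | succ k ih =>
    rw [prod_Icc_succ_top (Nat.le_add_left 1 k), Nat.succ_mul,
      ← add_choose_mul_factorial_mul_factorial, ← ih, pow_succ]
    ring

theorem prod_Icc_choose_mul_ne_zero (s k : ℕ) : ∏ i ∈ Icc 1 k, (i * s).choose s ≠ 0 :=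
  left_ne_zero_of_mul ((prod_Icc_choose_mul_mul_factorial_pow s k).symm ▸ factorial_ne_zero _)

theorem prod_Icc_choose_mul_mul_prod_mul_choose {k m : ℕ} (s : ℕ) (hk : k ≤ m) :
    (∏ i ∈ Icc 1 k, (i * s).choose s) * (∏ j ∈ Icc 1 (m - k), (j * s).choose s) *
        (m * s).choose (k * s) = ∏ l ∈ Icc 1 m, (l * s).choose s := by
  apply Nat.eq_of_mul_eq_mul_right (pow_pos s.factorial_pos m)
  have hpow : s ! ^ m = s ! ^ k * s ! ^ (m - k) := by rw [← pow_add, Nat.add_sub_cancel' hk]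
  calc _ = (m * s).choose (k * s) * ((∏ i ∈ Icc 1 k, (i * s).choose s) * s ! ^ k) *
        ((∏ j ∈ Icc 1 (m - k), (j * s).choose s) * s ! ^ (m - k)) := by
          rw [hpow]; ring
    _ = (m * s)! := by
      rw [prod_Icc_choose_mul_mul_factorial_pow, prod_Icc_choose_mul_mul_factorial_pow,
        Nat.sub_mul, choose_mul_factorial_mul_factorial (Nat.mul_le_mul_right s hk)]
    _ = _ := (prod_Icc_choose_mul_mul_factorial_pow s m).symm

end Nat

theorem stmt1_general (s m k : ℕ) (hk1 : 1 ≤ k) (hk2 : k ≤ m - 1) :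
    (((∏ i ∈ Finset.Icc 1 k, ((i * s).choose s : ℝ)) *
        ∏ j ∈ Finset.Icc 1 (m - k), ((j * s).choose s : ℝ)) /
        ∏ l ∈ Finset.Icc 1 m, ((l * s).choose s : ℝ) ≤ 1 / ((m * s).choose s : ℝ)) ∧
    ((m : ℝ) ^ s ≤ ((m * s).choose s : ℝ)) ∧
    (((∏ i ∈ Finset.Icc 1 k, ((i * s).choose s : ℝ)) *
        ∏ j ∈ Finset.Icc 1 (m - k), ((j * s).choose s : ℝ)) /
        ∏ l ∈ Finset.Icc 1 m, ((l * s).choose s : ℝ) ≤ 1 / (m : ℝ) ^ s) := by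
  have hsplit := congrArg (Nat.cast : ℕ → ℝ)
    (Nat.prod_Icc_choose_mul_mul_prod_mul_choose s (by omega : k ≤ m))
  have hparts : ((∏ i ∈ Icc 1 k, (i * s).choose s) *
      ∏ j ∈ Icc 1 (m - k), (j * s).choose s : ℝ) ≠ 0 := by
    exact_mod_cast mul_ne_zero (Nat.prod_Icc_choose_mul_ne_zero s k)
      (Nat.prod_Icc_choose_mul_ne_zero s (m - k))
  push_cast at hsplit hparts
  have hmid : (m * s).choose s ≤ (m * s).choose (k * s) :=
    Nat.choose_le_choose_of_le_of_add_le (Nat.le_mul_of_pos_left s hk1)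
      (by rw [add_comm, ← add_one_mul]; exact Nat.mul_le_mul_right s (by omega))
  have hpow : (m : ℝ) ^ s ≤ (m * s).choose s := by exact_mod_cast Nat.pow_le_choose_mul m s
  have hpow_pos : (0 : ℝ) < (m : ℝ) ^ s := by
    have : 0 < m := by omega
    positivity
  rw [← hsplit, div_mul_cancel_left₀ hparts, ← one_div]
  have hbound := one_div_le_one_div_of_le (hpow_pos.trans_le hpow) (Nat.cast_le.mpr hmid)
  exact ⟨hbound, hpow, hbound.trans (one_div_le_one_div_of_le hpow_pos hpow)⟩

/-- The regrouping-probability ratio of products of binomial coefficients is at most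
`1 / C(ms, s)`, and `C(ms, s) ≥ m^s`, so the ratio is at most `1/m^s`. -/
theorem stmt1 (s m k : ℕ) (hs : 0 < s) (hm : 2 ≤ m) (hk1 : 1 ≤ k) (hk2 : k ≤ m - 1) :
    (((∏ i ∈ Finset.Icc 1 k, ((i * s).choose s : ℝ)) *
        ∏ j ∈ Finset.Icc 1 (m - k), ((j * s).choose s : ℝ)) /
        ∏ l ∈ Finset.Icc 1 m, ((l * s).choose s : ℝ) ≤ 1 / ((m * s).choose s : ℝ)) ∧
    ((m : ℝ) ^ s ≤ ((m * s).choose s : ℝ)) ∧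
    (((∏ i ∈ Finset.Icc 1 k, ((i * s).choose s : ℝ)) *
        ∏ j ∈ Finset.Icc 1 (m - k), ((j * s).choose s : ℝ)) /
        ∏ l ∈ Finset.Icc 1 m, ((l * s).choose s : ℝ) ≤ 1 / (m : ℝ) ^ s) :=
  stmt1_general s m k hk1 hk2
end

section
/- Let x_1,...,x_n ∈ ℝ^d with ‖x_i‖₂ ≤ 1, y_i ∈ {−1,1}, and let θ_t satisfy θ_t = θ_{t−1} − (η/(4s)) Σ_{i∈B_t} (θ_{t−1}ᵀx_i − 2y_i) x_i with constant learning rate η > 0 and batches B_t of size s. Suppose max_{1≤i≤n} |θ_0ᵀx_i| = ε < 2. Then for every iteration t with 1 ≤ t ≤ T_ε := ⌈log_{1+η/4}(4/(2+ε))⌉ and every i ∈ {1,...,n}, |θ_{t−1}ᵀx_i| < 2; consequently, for i ∈ B_t, the coefficient f_{i,t} := θ_{t−1}ᵀx_i − 2y_i satisfies sign(f_{i,t}) = −y_i. -/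
/-!
Write `b = 1 + η/4`. Since `‖x_i‖ ≤ 1`, one gradient step moves every `⟪θ, x_j⟫` by at most
`(η/4) · max_i |⟪θ, x_i⟫ - 2 y_i| ≤ (η/4) (max_i |⟪θ, x_i⟫| + 2)`, so the quantity
`max_i |⟪θ_t, x_i⟫| + 2` grows at most by the factor `b` per step and is at most `b^t (ε + 2)`.
For `t + 1 ≤ ⌈log_b (4/(2+ε))⌉` this is `< 4`, i.e. `|⟪θ_t, x_i⟫| < 2`, and then
`⟪θ_t, x_i⟫ - 2 y_i` has the sign of `-y_i`.
-/

open Finset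
open scoped RealInnerProductSpace

section TaylorGD

variable {E ι : Type*} [NormedAddCommGroup E] [InnerProductSpace ℝ E]

/-- One step of mini-batch gradient descent on the logistic loss with the sigmoid replaced by its
first-order Taylor expansion `σ(z) ≈ 1/2 + z/4`. -/
noncomputable def taylorGDStep (x : ι → E) (y : ι → ℝ) (η : ℝ) (B : Finset ι) (θ : E) : E :=
  θ - (η / (4 * #B)) • ∑ i ∈ B, (⟪θ, x i⟫ - 2 * y i) • x i

lemma inner_taylorGDStep (x : ι → E) (y : ι → ℝ) (η : ℝ) (B : Finset ι) (θ v : E) :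
    ⟪taylorGDStep x y η B θ, v⟫ =
      ⟪θ, v⟫ - η / (4 * #B) * ∑ i ∈ B, (⟪θ, x i⟫ - 2 * y i) * ⟪x i, v⟫ := by
  simp only [taylorGDStep, inner_sub_left, real_inner_smul_left, sum_inner]

lemma div_four_mul_card_mul_card_le {η : ℝ} (hη : 0 ≤ η) (B : Finset ι) :
    η / (4 * #B) * #B ≤ η / 4 := by
  rcases eq_or_ne (#B : ℝ) 0 with hB | hB
  · simp only [hB, mul_zero]
    positivity
  · rw [div_mul_eq_mul_div, mul_div_mul_right _ _ hB]

lemma abs_inner_taylorGDStep_le {x : ι → E} (hx : ∀ i, ‖x i‖ ≤ 1) {y : ι → ℝ}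
    (hy : ∀ i, |y i| ≤ 1) {η : ℝ} (hη : 0 ≤ η) (B : Finset ι) {θ : E} {c : ℝ}
    (hc : ∀ i, |⟪θ, x i⟫| ≤ c) (j : ι) :
    |⟪taylorGDStep x y η B θ, x j⟫| ≤ (1 + η / 4) * (c + 2) - 2 := by
  have hterm : ∀ i, |(⟪θ, x i⟫ - 2 * y i) * ⟪x i, x j⟫| ≤ c + 2 := fun i ↦ by
    have hcoef : |⟪θ, x i⟫ - 2 * y i| ≤ c + 2 := by
      have := abs_sub (⟪θ, x i⟫) (2 * y i)
      rw [abs_mul, abs_two] at this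
      linarith [hc i, hy i]
    have hxx : |⟪x i, x j⟫| ≤ 1 :=
      (abs_real_inner_le_norm _ _).trans (mul_le_one₀ (hx i) (norm_nonneg _) (hx j))
    rw [abs_mul]
    nlinarith [abs_nonneg (⟪θ, x i⟫ - 2 * y i), abs_nonneg ⟪x i, x j⟫]
  have hsum : |∑ i ∈ B, (⟪θ, x i⟫ - 2 * y i) * ⟪x i, x j⟫| ≤ #B * (c + 2) := by
    calc |∑ i ∈ B, (⟪θ, x i⟫ - 2 * y i) * ⟪x i, x j⟫|
        ≤ ∑ i ∈ B, |(⟪θ, x i⟫ - 2 * y i) * ⟪x i, x j⟫| := abs_sum_le_sum_abs _ _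
      _ ≤ ∑ _i ∈ B, (c + 2) := sum_le_sum fun i _ ↦ hterm i
      _ = #B * (c + 2) := by rw [sum_const, nsmul_eq_mul]
  have hc2 : 0 ≤ c + 2 := by linarith [hc j, abs_nonneg ⟪θ, x j⟫]
  calc |⟪taylorGDStep x y η B θ, x j⟫|
      ≤ |⟪θ, x j⟫| + η / (4 * #B) * |∑ i ∈ B, (⟪θ, x i⟫ - 2 * y i) * ⟪x i, x j⟫| := by
        rw [inner_taylorGDStep]
        refine (abs_sub _ _).trans_eq ?_
        rw [abs_mul, abs_of_nonneg (by positivity : 0 ≤ η / (4 * #B))]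
    _ ≤ c + η / (4 * #B) * (#B * (c + 2)) := by gcongr; exact hc j
    _ ≤ c + η / 4 * (c + 2) := by
        rw [← mul_assoc]
        gcongr
        exact div_four_mul_card_mul_card_le hη B
    _ = (1 + η / 4) * (c + 2) - 2 := by ring

lemma abs_inner_taylorGD_le {x : ι → E} (hx : ∀ i, ‖x i‖ ≤ 1) {y : ι → ℝ}
    (hy : ∀ i, |y i| ≤ 1) {η : ℝ} (hη : 0 ≤ η) (B : ℕ → Finset ι) {θ : ℕ → E}
    (hθ : ∀ t, θ (t + 1) = taylorGDStep x y η (B (t + 1)) (θ t)) {ε : ℝ}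
    (hε : ∀ i, |⟪θ 0, x i⟫| ≤ ε) (t : ℕ) (i : ι) :
    |⟪θ t, x i⟫| ≤ (1 + η / 4) ^ t * (ε + 2) - 2 := by
  induction t generalizing i with
  | zero => simpa using hε i
  | succ t ih =>
    rw [hθ, pow_succ', mul_assoc]
    simpa only [sub_add_cancel] using abs_inner_taylorGDStep_le hx hy hη (B (t + 1)) ih i

end TaylorGD

lemma pow_lt_of_add_one_le_ceil_logb {b a : ℝ} (hb : 1 < b) (ha : 0 < a) {n : ℕ}
    (hn : ((n + 1 : ℕ) : ℤ) ≤ ⌈Real.logb b a⌉) : b ^ n < a := by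
  rw [Int.le_ceil_iff, Nat.cast_succ, Int.cast_add, Int.cast_natCast, Int.cast_one,
    add_sub_cancel_right, Real.lt_logb_iff_rpow_lt hb ha, Real.rpow_natCast] at hn
  exact hn

lemma sign_sub_two_mul_eq_neg {a y : ℝ} (ha : |a| < 2) (hy : y = 1 ∨ y = -1) :
    Real.sign (a - 2 * y) = -y := by
  rw [abs_lt] at ha
  rcases hy with rfl | rfl
  · exact Real.sign_of_neg (by linarith)
  · rw [Real.sign_of_pos (by linarith), neg_neg]

theorem stmt6_general (d n s : ℕ)
    (x : Fin n → EuclideanSpace ℝ (Fin d)) (hx : ∀ i, ‖x i‖ ≤ 1)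
    (y : Fin n → ℝ) (hy : ∀ i, y i = 1 ∨ y i = -1)
    (B : ℕ → Finset (Fin n)) (hB : ∀ t, (B t).card = s)
    (η : ℝ) (hη : 0 < η)
    (θ : ℕ → EuclideanSpace ℝ (Fin d))
    (hupd : ∀ t : ℕ, 1 ≤ t →
      θ t = θ (t - 1) - (η / (4 * s)) •
        ∑ i ∈ B t, (⟪θ (t - 1), x i⟫ - 2 * y i) • x i)
    (ε : ℝ) (hε : (⨆ i, |⟪θ 0, x i⟫|) = ε) :
    ∀ t : ℕ, 1 ≤ t → (t : ℤ) ≤ ⌈Real.logb (1 + η / 4) (4 / (2 + ε))⌉ →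
      (∀ i, |⟪θ (t - 1), x i⟫| < 2) ∧
      ∀ i ∈ B t, Real.sign (⟪θ (t - 1), x i⟫ - 2 * y i) = -y i := by
  intro t ht htT
  obtain ⟨k, rfl⟩ := Nat.exists_eq_add_of_le' ht
  rw [Nat.add_sub_cancel]
  have hε0 : 0 ≤ ε := hε ▸ Real.iSup_nonneg fun i ↦ abs_nonneg _
  have hθ : ∀ t, θ (t + 1) = taylorGDStep x y η (B (t + 1)) (θ t) := fun t ↦ by
    rw [hupd (t + 1) t.succ_pos, Nat.add_sub_cancel, taylorGDStep, hB]
  have hθ0 : ∀ i, |⟪θ 0, x i⟫| ≤ ε := fun i ↦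
    hε ▸ le_ciSup (f := fun i ↦ |⟪θ 0, x i⟫|) (Set.finite_range _).bddAbove i
  have hy1 : ∀ i, |y i| ≤ 1 := fun i ↦ by rcases hy i with h | h <;> simp [h]
  have hpow : (1 + η / 4) ^ k < 4 / (2 + ε) :=
    pow_lt_of_add_one_le_ceil_logb (by linarith) (by positivity) htT
  have hsmall : ∀ i, |⟪θ k, x i⟫| < 2 := fun i ↦ by
    have := abs_inner_taylorGD_le hx hy1 hη.le B hθ hθ0 k i
    rw [lt_div_iff₀ (by linarith)] at hpow
    linarith
  exact ⟨hsmall, fun i _ ↦ sign_sub_two_mul_eq_neg (hsmall i) (hy i)⟩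

/-- If `max_i |θ_0ᵀx_i| = ε < 2`, then for every iteration
`1 ≤ t ≤ ⌈log_{1+η/4}(4/(2+ε))⌉` all full inner products satisfy `|θ_{t-1}ᵀx_i| < 2`,
hence `sign(f_{i,t}) = -y_i` for the batch coefficients `f_{i,t} = θ_{t-1}ᵀx_i - 2y_i`. -/
theorem stmt6 (d n s : ℕ) (hn : 0 < n) (hs : 0 < s)
    (x : Fin n → EuclideanSpace ℝ (Fin d)) (hx : ∀ i, ‖x i‖ ≤ 1)
    (y : Fin n → ℝ) (hy : ∀ i, y i = 1 ∨ y i = -1)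
    (B : ℕ → Finset (Fin n)) (hB : ∀ t, (B t).card = s)
    (η : ℝ) (hη : 0 < η)
    (θ : ℕ → EuclideanSpace ℝ (Fin d))
    (hupd : ∀ t : ℕ, 1 ≤ t →
      θ t = θ (t - 1) - (η / (4 * s)) •
        ∑ i ∈ B t, (⟪θ (t - 1), x i⟫ - 2 * y i) • x i)
    (ε : ℝ) (hε : (⨆ i, |⟪θ 0, x i⟫|) = ε) (hε2 : ε < 2) :
    ∀ t : ℕ, 1 ≤ t → (t : ℤ) ≤ ⌈Real.logb (1 + η / 4) (4 / (2 + ε))⌉ →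
      (∀ i, |⟪θ (t - 1), x i⟫| < 2) ∧
      ∀ i ∈ B t, Real.sign (⟪θ (t - 1), x i⟫ - 2 * y i) = -y i :=
  stmt6_general d n s x hx y hy B hB η hη θ hupd ε hε
end

section
/- There exists an absolute constant c > 0 such that the following holds. For each t ∈ {1,...,T}, let X^A_t ∈ ℝ^{d_A×s} and X^B_t ∈ ℝ^{d_B×s} be matrices all of whose columns have Euclidean norm at most 1, let Z^A_t ~ N(0, σ_A² I_s) and Z^B_t ~ N(0, σ_B² I_s) be Gaussian vectors, and define e_t := (1/(4s))·(X^A_t Z^B_t ; X^B_t Z^A_t) ∈ ℝ^{d_A+d_B}. Set σ := max{σ_A, σ_B}. Then for every k ≥ 1, with probability at least 1 − 2T·exp(−ck), one has ‖e_t‖₂ ≤ √(k/s)·σ simultaneously for all t ∈ {1,...,T}. -/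
/-!
Each half of `e_t` is `(4s)⁻¹ • X z` with `z ~ N(0, v I_s)`, `v ≤ σ²`, and the column bound gives
`F := ‖X‖_F² ≤ s`. Writing `‖X z‖² = ∑_r p_r · F ⟨x_r, z⟩² / ‖x_r‖²` with the weights
`p_r = ‖x_r‖² / F` given by the rows `x_r`, Jensen's inequality for `exp` bounds
`E exp(‖X z‖² / (4 v F))` by the same quantity for a single Gaussian `g = ⟨x_r, z⟩`, namely
`E exp(g² / (4 Var g)) = √2`. Chernoff's bound then gives `P(‖X z‖² > 4 t v F) ≤ √2 e^{-t}`;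
with `t = 2k` and a union bound over the `2T` halves this is the theorem with `c = 1`.
-/

open MeasureTheory Finset ProbabilityTheory Real
open scoped NNReal ENNReal Matrix

lemma lintegral_exp_mul_sq_gaussianReal (v : ℝ≥0) {c : ℝ} (hc : 2 * c * v < 1) :
    ∫⁻ x, ENNReal.ofReal (exp (c * x ^ 2)) ∂gaussianReal 0 v
      = ENNReal.ofReal (1 / √(1 - 2 * c * v)) := by
  rcases eq_or_ne v 0 with rfl | hv
  · simp [gaussianReal_zero_var]
  have hv' : (0 : ℝ) < v := by positivity
  set b := (1 - 2 * c * v) / (2 * v) with hb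
  have hb0 : 0 < b := div_pos (by linarith) (by positivity)
  have hpdf : ∀ x, gaussianPDF 0 v x * ENNReal.ofReal (exp (c * x ^ 2))
      = ENNReal.ofReal (√(2 * π * v))⁻¹ * ENNReal.ofReal (exp (-b * x ^ 2)) := by
    intro x
    rw [gaussianPDF_def, gaussianPDFReal_def, ← ENNReal.ofReal_mul (by positivity),
      ← ENNReal.ofReal_mul (by positivity), mul_assoc, ← exp_add]
    congr 3
    rw [hb]
    field_simp
    ring
  rw [gaussianReal_of_var_ne_zero _ hv, lintegral_withDensity_eq_lintegral_mul _
    (measurable_gaussianPDF 0 v) (by fun_prop)]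
  simp only [Pi.mul_apply, hpdf]
  rw [lintegral_const_mul _ (by fun_prop), ← ofReal_integral_eq_lintegral_ofReal
    (integrable_exp_neg_mul_sq hb0) (ae_of_all _ fun _ => (exp_pos _).le), integral_gaussian,
    ← ENNReal.ofReal_mul (by positivity)]
  congr 1
  rw [hb, ← sqrt_inv, ← sqrt_mul (by positivity), one_div, ← sqrt_inv]
  congr 1
  field_simp

section GaussianVector

variable {ι : Type*} [Fintype ι] (v : ℝ≥0)

lemma coe_mul_sum_nnnorm_sq (a : ι → ℝ) :
    ((v * ∑ i, ‖a i‖₊ ^ 2 : ℝ≥0) : ℝ) = v * ∑ i, a i ^ 2 := by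
  push_cast [Real.norm_eq_abs, sq_abs]
  rfl

lemma map_pi_gaussianReal_dotProduct (a : ι → ℝ) :
    (Measure.pi fun _ : ι => gaussianReal 0 v).map (a ⬝ᵥ ·)
      = gaussianReal 0 (v * ∑ i, ‖a i‖₊ ^ 2) := by
  refine Measure.ext_of_charFun (funext fun t => ?_)
  have hprod : ∀ z : ι → ℝ, Complex.exp (t * (a ⬝ᵥ z) * Complex.I)
      = ∏ i, Complex.exp ((t * a i : ℝ) * z i * Complex.I) := by
    intro z
    simp only [← Complex.exp_sum, dotProduct, Complex.ofReal_sum, Finset.mul_sum,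
      Finset.sum_mul]
    exact congrArg _ (Finset.sum_congr rfl fun i _ => by push_cast; ring)
  rw [charFun_apply_real, integral_map (by fun_prop) (by fun_prop)]
  simp_rw [hprod]
  rw [integral_fintype_prod_eq_prod
    (fun i (x : ℝ) => Complex.exp ((t * a i : ℝ) * x * Complex.I))]
  simp_rw [← charFun_apply_real, charFun_gaussianReal, ← Complex.exp_sum]
  rw [coe_mul_sum_nnnorm_sq]
  push_cast
  simp only [mul_zero, zero_mul, zero_sub, Finset.mul_sum, Finset.sum_mul, Finset.sum_div,
    ← Finset.sum_neg_distrib]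
  exact congrArg _ (Finset.sum_congr rfl fun i _ => by ring)

-- When `v * ∑ i, a i ^ 2 = 0` the exponent is a division by zero, hence `0`.
lemma lintegral_exp_dotProduct_sq_le (a : ι → ℝ) :
    ∫⁻ z, ENNReal.ofReal (exp ((a ⬝ᵥ z) ^ 2 / (4 * (v * ∑ i, a i ^ 2))))
        ∂(Measure.pi fun _ : ι => gaussianReal 0 v) ≤ ENNReal.ofReal √2 := by
  set w : ℝ≥0 := v * ∑ i, ‖a i‖₊ ^ 2
  have hw : (w : ℝ) = v * ∑ i, a i ^ 2 := coe_mul_sum_nnnorm_sq v a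
  have hsq : ∀ x : ℝ, x ^ 2 / (4 * w) = (4 * w : ℝ)⁻¹ * x ^ 2 := fun x => by ring
  simp_rw [← hw, hsq]
  rw [← lintegral_map (f := fun x => ENNReal.ofReal (exp ((4 * w : ℝ)⁻¹ * x ^ 2)))
    (g := (a ⬝ᵥ ·)) (by fun_prop) (by fun_prop), map_pi_gaussianReal_dotProduct]
  rcases eq_or_ne (w : ℝ) 0 with h0 | h0
  · rw [lintegral_exp_mul_sq_gaussianReal w (by simp [h0])]
    simp only [h0, mul_zero, inv_zero, sub_zero, sqrt_one, div_one]
    exact ENNReal.ofReal_le_ofReal (one_le_sqrt.mpr one_le_two)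
  · have h2 : 2 * (4 * w : ℝ)⁻¹ * w = 2⁻¹ := by field_simp; norm_num
    rw [lintegral_exp_mul_sq_gaussianReal w (by rw [h2]; norm_num), h2]
    norm_num

lemma ae_dotProduct_eq_zero {a : ι → ℝ} (ha : v * ∑ i, a i ^ 2 = 0) :
    ∀ᵐ z ∂(Measure.pi fun _ : ι => gaussianReal 0 v), a ⬝ᵥ z = 0 := by
  have hw : v * ∑ i, ‖a i‖₊ ^ 2 = 0 := by
    rw [← NNReal.coe_eq_zero, coe_mul_sum_nnnorm_sq, ha]
  have hmap := map_pi_gaussianReal_dotProduct v a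
  rw [hw, gaussianReal_zero_var] at hmap
  refine ae_of_ae_map (p := (· = 0)) (f := (a ⬝ᵥ ·)) (by fun_prop) ?_
  rw [hmap, ae_dirac_eq]
  rfl

lemma lintegral_exp_sum_mulVec_sq_le {m : Type*} [Fintype m] (X : Matrix m ι ℝ) :
    ∫⁻ z, ENNReal.ofReal (exp ((∑ r, (X *ᵥ z) r ^ 2) / (4 * (v * ∑ r, ∑ j, X r j ^ 2))))
        ∂(Measure.pi fun _ : ι => gaussianReal 0 v) ≤ ENNReal.ofReal √2 := by
  set ρ : m → ℝ := fun r => ∑ j, X r j ^ 2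
  set F := ∑ r, ρ r
  rcases eq_or_ne ((v : ℝ) * F) 0 with h0 | h0
  · simp only [h0, mul_zero, div_zero, exp_zero, ENNReal.ofReal_one, lintegral_const,
      measure_univ, mul_one]
    exact ENNReal.one_le_ofReal.mpr (one_le_sqrt.mpr one_le_two)
  have hF : 0 < F := lt_of_le_of_ne (by positivity) (right_ne_zero_of_mul h0).symm
  have hjensen : ∀ z : ι → ℝ, ENNReal.ofReal (exp ((∑ r, (X *ᵥ z) r ^ 2) / (4 * (v * F))))
      ≤ ∑ r, ENNReal.ofReal (ρ r / F) *
          ENNReal.ofReal (exp ((X r ⬝ᵥ z) ^ 2 / (4 * (v * ρ r)))) := by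
    intro z
    have hterm : ∀ r, ρ r / F * ((X r ⬝ᵥ z) ^ 2 / (4 * (v * ρ r)))
        = (X *ᵥ z) r ^ 2 / (4 * (v * F)) := by
      intro r
      rcases eq_or_ne (ρ r) 0 with hρ | hρ
      · have hrow : X r = 0 := funext fun j => pow_eq_zero_iff two_ne_zero |>.mp <|
          (Finset.sum_eq_zero_iff_of_nonneg fun j _ => sq_nonneg (X r j)).mp hρ j (mem_univ j)
        simp [hρ, Matrix.mulVec, hrow]
      · have hv : (v : ℝ) ≠ 0 := left_ne_zero_of_mul h0
        simp only [Matrix.mulVec]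
        field_simp
    have h := convexOn_exp.map_sum_le (t := univ) (w := fun r => ρ r / F)
      (p := fun r => (X r ⬝ᵥ z) ^ 2 / (4 * (v * ρ r))) (fun r _ => by positivity)
      (by rw [← Finset.sum_div, div_self hF.ne']) (fun r _ => Set.mem_univ _)
    simp only [smul_eq_mul, hterm, ← Finset.sum_div] at h
    refine (ENNReal.ofReal_le_ofReal h).trans_eq ?_
    rw [ENNReal.ofReal_sum_of_nonneg fun r _ => by positivity]
    exact Finset.sum_congr rfl fun r _ => ENNReal.ofReal_mul (by positivity)
  calc _ ≤ ∫⁻ z, ∑ r, ENNReal.ofReal (ρ r / F) *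
          ENNReal.ofReal (exp ((X r ⬝ᵥ z) ^ 2 / (4 * (v * ρ r))))
          ∂(Measure.pi fun _ : ι => gaussianReal 0 v) := lintegral_mono hjensen
    _ ≤ ∑ r, ENNReal.ofReal (ρ r / F) * ENNReal.ofReal √2 := by
      rw [lintegral_finsetSum _ fun r _ => by fun_prop]
      refine Finset.sum_le_sum fun r _ => ?_
      rw [lintegral_const_mul _ (by fun_prop)]
      exact mul_le_mul_right (lintegral_exp_dotProduct_sq_le v (X r)) _
    _ = ENNReal.ofReal √2 := by
      rw [← Finset.sum_mul, ← ENNReal.ofReal_sum_of_nonneg fun r _ => by positivity,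
        ← Finset.sum_div, div_self hF.ne', ENNReal.ofReal_one, one_mul]

lemma measure_sum_mulVec_sq_gt_le {m : Type*} [Fintype m] (X : Matrix m ι ℝ) (t : ℝ) :
    (Measure.pi fun _ : ι => gaussianReal 0 v)
        {z | 4 * t * (v * ∑ r, ∑ j, X r j ^ 2) < ∑ r, (X *ᵥ z) r ^ 2}
      ≤ ENNReal.ofReal (√2 * exp (-t)) := by
  set F := ∑ r, ∑ j, X r j ^ 2
  rcases eq_or_ne ((v : ℝ) * F) 0 with h0 | h0
  · have hrows : ∀ r, (v : ℝ) * ∑ j, X r j ^ 2 = 0 := by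
      intro r
      rcases mul_eq_zero.mp h0 with hv | hF
      · rw [hv, zero_mul]
      · rw [(Finset.sum_eq_zero_iff_of_nonneg fun r _ => by positivity).mp hF r (mem_univ r),
          mul_zero]
    have hae : ∀ᵐ z ∂(Measure.pi fun _ : ι => gaussianReal 0 v), ∀ r, (X *ᵥ z) r = 0 :=
      ae_all_iff.mpr fun r => ae_dotProduct_eq_zero v (hrows r)
    refine le_of_eq_of_le (measure_mono_null (fun z hz => ?_) (ae_iff.mp hae)) zero_le
    simp only [Set.mem_ofPred_eq, h0, mul_zero] at hz ⊢
    intro hzero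
    simp [hzero] at hz
  have hpos : 0 < 4 * ((v : ℝ) * F) := by positivity
  calc _ ≤ (Measure.pi fun _ : ι => gaussianReal 0 v)
        {z | ENNReal.ofReal (exp t)
          ≤ ENNReal.ofReal (exp ((∑ r, (X *ᵥ z) r ^ 2) / (4 * (v * F))))} := by
        refine measure_mono fun z hz => ENNReal.ofReal_le_ofReal (exp_le_exp.mpr ?_)
        rw [le_div_iff₀ hpos]
        exact (le_of_eq (by ring)).trans hz.le
    _ ≤ (∫⁻ z, ENNReal.ofReal (exp ((∑ r, (X *ᵥ z) r ^ 2) / (4 * (v * F))))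
          ∂(Measure.pi fun _ : ι => gaussianReal 0 v)) / ENNReal.ofReal (exp t) :=
        meas_ge_le_lintegral_div (by fun_prop) (by simp [exp_pos]) ENNReal.ofReal_ne_top
    _ ≤ ENNReal.ofReal √2 / ENNReal.ofReal (exp t) :=
        ENNReal.div_le_div_right (lintegral_exp_sum_mulVec_sq_le v X) _
    _ = ENNReal.ofReal (√2 * exp (-t)) := by
        rw [← ENNReal.ofReal_div_of_pos (exp_pos t), exp_neg, div_eq_mul_inv]

end GaussianVector

lemma sum_sum_sq_le_card_of_col_norm_le_one {m n : Type*} [Fintype m] [Fintype n]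
    (X : Matrix m n ℝ) (hX : ∀ j, √(∑ r, X r j ^ 2) ≤ 1) :
    ∑ r, ∑ j, X r j ^ 2 ≤ Fintype.card n := by
  rw [Finset.sum_comm, Fintype.card_eq_sum_ones, Nat.cast_sum, Nat.cast_one]
  exact Finset.sum_le_sum fun j _ => by simpa using (sqrt_le_left zero_le_one).mp (hX j)

lemma measure_sum_mulVec_sq_gt_le_of_map_eq {Ω : Type*} [MeasurableSpace Ω] {P : Measure Ω}
    {m : Type*} [Fintype m] {s : ℕ} {w : ℝ≥0} {Z : Ω → Fin s → ℝ} (hZ : Measurable Z)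
    (hlaw : P.map Z = Measure.pi fun _ => gaussianReal 0 (w ^ 2)) (X : Matrix m (Fin s) ℝ)
    (hX : ∀ j, √(∑ r, X r j ^ 2) ≤ 1) {σ k : ℝ} (hwσ : (w : ℝ) ≤ σ) (hk : 1 ≤ k) :
    P {ω | 8 * k * s * σ ^ 2 < ∑ r, (X *ᵥ Z ω) r ^ 2} ≤ ENNReal.ofReal (exp (-k)) := by
  have hvar : ((w ^ 2 : ℝ≥0) : ℝ) * ∑ r, ∑ j, X r j ^ 2 ≤ s * σ ^ 2 := by
    have hF := sum_sum_sq_le_card_of_col_norm_le_one X hX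
    rw [Fintype.card_fin] at hF
    push_cast
    nlinarith [pow_le_pow_left₀ w.coe_nonneg hwσ 2, sq_nonneg (w : ℝ),
      show 0 ≤ ∑ r, ∑ j, X r j ^ 2 by positivity]
  have hexp : √2 * exp (-(2 * k)) ≤ exp (-k) := by
    have h2 : √2 ≤ exp k := by
      nlinarith [add_one_le_exp k, sq_sqrt (zero_le_two : (0 : ℝ) ≤ 2), sqrt_nonneg 2]
    calc √2 * exp (-(2 * k)) ≤ exp k * exp (-(2 * k)) := by gcongr
      _ = exp (-k) := by rw [← exp_add]; ring_nf
  calc _ ≤ P.map Z {z | 8 * k * s * σ ^ 2 < ∑ r, (X *ᵥ z) r ^ 2} :=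
        Measure.le_map_apply hZ.aemeasurable _
    _ ≤ (Measure.pi fun _ => gaussianReal 0 (w ^ 2))
          {z | 4 * (2 * k) * ((w ^ 2 : ℝ≥0) * ∑ r, ∑ j, X r j ^ 2) < ∑ r, (X *ᵥ z) r ^ 2} := by
        rw [hlaw]
        refine measure_mono (Set.ofPred_subset_ofPred.mpr fun z hz => lt_of_le_of_lt ?_ hz)
        nlinarith
    _ ≤ ENNReal.ofReal (exp (-k)) :=
        (measure_sum_mulVec_sq_gt_le _ X _).trans (ENNReal.ofReal_le_ofReal hexp)

lemma sqrt_sum_sq_scaled_le {m n : Type*} [Fintype m] [Fintype n] {u : m → ℝ} {w : n → ℝ}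
    {s k σ : ℝ} (hs : 0 < s) (hσ : 0 ≤ σ) (hu : ∑ r, u r ^ 2 ≤ 8 * k * s * σ ^ 2)
    (hw : ∑ r, w r ^ 2 ≤ 8 * k * s * σ ^ 2) :
    √(∑ r, (1 / (4 * s) * u r) ^ 2 + ∑ r, (1 / (4 * s) * w r) ^ 2) ≤ √(k / s) * σ := by
  simp only [mul_pow, ← Finset.mul_sum]
  calc _ ≤ √(k / s * σ ^ 2) := by
        refine sqrt_le_sqrt ?_
        have hc : 0 ≤ (1 / (4 * s)) ^ 2 := sq_nonneg _
        have hkey :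
            (1 / (4 * s)) ^ 2 * (8 * k * s * σ ^ 2 + 8 * k * s * σ ^ 2) = k / s * σ ^ 2 := by
          field_simp
          ring
        nlinarith [mul_le_mul_of_nonneg_left hu hc, mul_le_mul_of_nonneg_left hw hc]
    _ = √(k / s) * σ := by rw [sqrt_mul' _ (sq_nonneg σ), sqrt_sq hσ]

lemma ofReal_one_sub_card_mul_le_measure {Ω ι : Type*} [MeasurableSpace Ω] {P : Measure Ω}
    [IsProbabilityMeasure P] [Fintype ι] {G : Set Ω} (B : ι → Set Ω) {ε : ℝ} (hε : 0 ≤ ε)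
    (hB : ∀ i, P (B i) ≤ ENNReal.ofReal ε) (hG : Gᶜ ⊆ ⋃ i, B i) :
    ENNReal.ofReal (1 - Fintype.card ι * ε) ≤ P G := by
  have hcompl : P Gᶜ ≤ ENNReal.ofReal (Fintype.card ι * ε) := by
    calc P Gᶜ ≤ ∑ i, P (B i) := (measure_mono hG).trans (measure_iUnion_fintype_le P B)
      _ ≤ ∑ _i : ι, ENNReal.ofReal ε := Finset.sum_le_sum fun i _ => hB i
      _ = ENNReal.ofReal (Fintype.card ι * ε) := by
        rw [Finset.sum_const, nsmul_eq_mul, ENNReal.ofReal_mul (Nat.cast_nonneg _),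
          ENNReal.ofReal_natCast, Finset.card_univ]
  have hunion : 1 ≤ P G + P Gᶜ := by
    rw [← measure_univ (μ := P), ← Set.union_compl_self G]
    exact measure_union_le G Gᶜ
  rw [ENNReal.ofReal_sub _ (by positivity), ENNReal.ofReal_one]
  exact (tsub_le_tsub_left hcompl 1).trans (tsub_le_iff_right.mpr hunion)

/-- Gaussian-noise gradient error bound: there is an absolute constant `c > 0` such that
for Gaussian masking noise `Z^A_t ~ N(0, σ_A² I_s)`, `Z^B_t ~ N(0, σ_B² I_s)` and matrices
whose columns have Euclidean norm at most 1, with probability at least `1 - 2T e^{-ck}`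
the gradient errors satisfy `‖e_t‖₂ ≤ √(k/s)·σ` simultaneously for all `t`. -/
theorem stmt10 :
    ∃ c : ℝ, 0 < c ∧
      ∀ (T dA dB s : ℕ), 0 < s →
      ∀ (XA : Fin T → Matrix (Fin dA) (Fin s) ℝ)
        (XB : Fin T → Matrix (Fin dB) (Fin s) ℝ),
        (∀ t j, Real.sqrt (∑ r, (XA t r j) ^ 2) ≤ 1) →
        (∀ t j, Real.sqrt (∑ r, (XB t r j) ^ 2) ≤ 1) →
      ∀ (σA σB : ℝ≥0) (Ω : Type) (_ : MeasurableSpace Ω) (P : Measure Ω),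
        IsProbabilityMeasure P →
      ∀ ZA ZB : Fin T → Ω → Fin s → ℝ,
        (∀ t, Measurable (ZA t)) → (∀ t, Measurable (ZB t)) →
        (∀ t, P.map (ZA t) =
          Measure.pi fun _ : Fin s => ProbabilityTheory.gaussianReal 0 (σA ^ 2)) →
        (∀ t, P.map (ZB t) =
          Measure.pi fun _ : Fin s => ProbabilityTheory.gaussianReal 0 (σB ^ 2)) →
      ∀ k : ℝ, 1 ≤ k →
        ENNReal.ofReal (1 - 2 * T * Real.exp (-c * k)) ≤
          P {ω | ∀ t : Fin T,
            Real.sqrt ((∑ r, ((1 / (4 * s)) * (XA t).mulVec (ZB t ω) r) ^ 2) +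
                       (∑ r, ((1 / (4 * s)) * (XB t).mulVec (ZA t ω) r) ^ 2))
              ≤ Real.sqrt (k / s) * max (σA : ℝ) (σB : ℝ)} := by
  refine ⟨1, one_pos, ?_⟩
  intro T dA dB s hs XA XB hXA hXB σA σB Ω _ P _ ZA ZB hZA hZB hlawA hlawB k hk
  set σ := max (σA : ℝ) (σB : ℝ)
  set τ := 8 * k * s * σ ^ 2
  rw [show 2 * (T : ℝ) * exp (-1 * k) = Fintype.card (Fin T) * (2 * exp (-k)) by
    rw [Fintype.card_fin]; ring_nf]
  refine ofReal_one_sub_card_mul_le_measure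
    (fun t => {ω | τ < ∑ r, (XA t *ᵥ ZB t ω) r ^ 2} ∪ {ω | τ < ∑ r, (XB t *ᵥ ZA t ω) r ^ 2})
    (by positivity) (fun t => ?_) ?_
  · calc _ ≤ ENNReal.ofReal (exp (-k)) + ENNReal.ofReal (exp (-k)) :=
          (measure_union_le _ _).trans (add_le_add
            (measure_sum_mulVec_sq_gt_le_of_map_eq (hZB t) (hlawB t) _ (hXA t) (le_max_right _ _) hk)
            (measure_sum_mulVec_sq_gt_le_of_map_eq (hZA t) (hlawA t) _ (hXB t) (le_max_left _ _) hk))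
      _ = ENNReal.ofReal (2 * exp (-k)) := by
          rw [← ENNReal.ofReal_add (exp_pos _).le (exp_pos _).le, two_mul]
  · intro ω hω
    by_contra hgood
    simp only [Set.mem_iUnion, Set.mem_union, Set.mem_ofPred_eq, not_exists, not_or,
      not_lt] at hgood
    exact hω fun t => sqrt_sum_sq_scaled_le (by exact_mod_cast hs)
      (le_max_of_le_left σA.coe_nonneg) (hgood t).1 (hgood t).2
end

section
/- Fix G > 1/2 and suppose ‖θ‖₂ ≤ 4G − 2, ‖θ'‖₂ ≤ 4G − 2, ‖x_i‖₂ ≤ 1 for all i, and y_i ∈ {−1,1}. For a batch B of size s, with each feature split as x_i = (x^A_i, x^B_i) and θ = (θ^A, θ^B), define the sensitive vectors SV^A(θ, B) := ((θ^A)ᵀx^A_i − 2y_i)_{i∈B} ∈ ℝ^s and SV^B(θ, B) := ((θ^B)ᵀx^B_i)_{i∈B} ∈ ℝ^s. Then: (i) if B = B', ‖SV^A(θ,B) − SV^A(θ',B')‖₂ ≤ √s·‖θ − θ'‖₂ and likewise for SV^B; (ii) if B and B' differ in exactly one index, ‖SV^A(θ,B) − SV^A(θ',B')‖₂ ≤ √(s‖θ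 − θ'‖₂² + (8G)²) and ‖SV^B(θ,B) − SV^B(θ',B')‖₂ ≤ √(s‖θ − θ'‖₂² + (8G−4)²). -/
open Finset
open scoped RealInnerProductSpace

/-! Every coordinate of the difference of two sensitive vectors on a common index is
`⟪θ - θ', x_i⟫`, bounded by `‖θ - θ'‖` via Cauchy–Schwarz since `‖x_i‖ ≤ 1`; summing over the
batch gives `s‖θ - θ'‖²`. When the batches differ in one index, that index contributes instead
`|⟪θ, x_p⟫ - ⟪θ', x_q⟫| ≤ 2(4G - 2)`, plus `2|y_p - y_q| ≤ 4` for the label part of `SV^A`. -/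

lemma abs_le_of_sqrt_sq_add_sq_le {a b c : ℝ} (h : √(a ^ 2 + b ^ 2) ≤ c) : |a| ≤ c :=
  calc |a| = √(a ^ 2) := (Real.sqrt_sq_eq_abs a).symm
    _ ≤ √(a ^ 2 + b ^ 2) := Real.sqrt_le_sqrt (le_add_of_nonneg_right (sq_nonneg b))
    _ ≤ c := h

lemma norm_le_of_sqrt_sq_add_sq_le_left {E F : Type*} [Norm E] [Norm F] {v : E} {w : F}
    {c : ℝ} (h : √(‖v‖ ^ 2 + ‖w‖ ^ 2) ≤ c) : ‖v‖ ≤ c :=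
  (le_abs_self _).trans (abs_le_of_sqrt_sq_add_sq_le h)

lemma norm_le_of_sqrt_sq_add_sq_le_right {E F : Type*} [Norm E] [Norm F] {v : E} {w : F}
    {c : ℝ} (h : √(‖v‖ ^ 2 + ‖w‖ ^ 2) ≤ c) : ‖w‖ ≤ c := by
  rw [add_comm] at h
  exact norm_le_of_sqrt_sq_add_sq_le_left h

section InnerProduct

variable {E : Type*} [NormedAddCommGroup E] [InnerProductSpace ℝ E]

lemma abs_inner_le_of_norm_le_one {u x : E} {c : ℝ} (hu : ‖u‖ ≤ c) (hx : ‖x‖ ≤ 1) :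
    |⟪u, x⟫| ≤ c :=
  (abs_real_inner_le_norm u x).trans ((mul_le_of_le_one_right (norm_nonneg u) hx).trans hu)

lemma inner_sq_le_of_norm_le_one (u : E) {x : E} (hx : ‖x‖ ≤ 1) : ⟪u, x⟫ ^ 2 ≤ ‖u‖ ^ 2 :=
  sq_le_sq.mpr (by simpa only [abs_norm] using abs_inner_le_of_norm_le_one le_rfl hx)

lemma abs_inner_sub_inner_le {u u' x x' : E} {c : ℝ} (hu : ‖u‖ ≤ c) (hu' : ‖u'‖ ≤ c)
    (hx : ‖x‖ ≤ 1) (hx' : ‖x'‖ ≤ 1) : |⟪u, x⟫ - ⟪u', x'⟫| ≤ 2 * c := by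
  have h := abs_inner_le_of_norm_le_one hu hx
  have h' := abs_inner_le_of_norm_le_one hu' hx'
  linarith [abs_sub ⟪u, x⟫ ⟪u', x'⟫]

end InnerProduct

section SumOfSquares

variable {ι : Type*} (I : Finset ι) (f : ι → ℝ) {M : ℝ}

lemma sqrt_sum_sq_le_sqrt_card_mul (hf : ∀ i ∈ I, f i ^ 2 ≤ M) :
    √(∑ i ∈ I, f i ^ 2) ≤ √(#I : ℝ) * √M := by
  rw [← Real.sqrt_mul (Nat.cast_nonneg _), ← nsmul_eq_mul]
  exact Real.sqrt_le_sqrt (sum_le_card_nsmul I _ M hf)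

lemma sqrt_sum_sq_add_sq_le {s : ℕ} {d D : ℝ} (hI : #I ≤ s) (hM : 0 ≤ M)
    (hf : ∀ i ∈ I, f i ^ 2 ≤ M) (hd : |d| ≤ D) :
    √(∑ i ∈ I, f i ^ 2 + d ^ 2) ≤ √(s * M + D ^ 2) := by
  have hsum : ∑ i ∈ I, f i ^ 2 ≤ s * M :=
    calc ∑ i ∈ I, f i ^ 2 ≤ #I * M := by rw [← nsmul_eq_mul]; exact sum_le_card_nsmul I _ M hf
      _ ≤ s * M := mul_le_mul_of_nonneg_right (by exact_mod_cast hI) hM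
  exact Real.sqrt_le_sqrt (add_le_add hsum (sq_le_sq' (abs_le.mp hd).1 (abs_le.mp hd).2))

end SumOfSquares

lemma abs_sub_le_two_of_eq_one_or_eq_neg_one {a b : ℝ} (ha : a = 1 ∨ a = -1)
    (hb : b = 1 ∨ b = -1) : |a - b| ≤ 2 := by
  rcases ha with rfl | rfl <;> rcases hb with rfl | rfl <;> norm_num

theorem stmt15_general (dA dB n s : ℕ) (G : ℝ)
    (xA : Fin n → EuclideanSpace ℝ (Fin dA)) (xB : Fin n → EuclideanSpace ℝ (Fin dB))
    (y : Fin n → ℝ) (hy : ∀ i, y i = 1 ∨ y i = -1)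
    (hx : ∀ i, Real.sqrt (‖xA i‖ ^ 2 + ‖xB i‖ ^ 2) ≤ 1)
    (θA θA' : EuclideanSpace ℝ (Fin dA)) (θB θB' : EuclideanSpace ℝ (Fin dB))
    (hθ : Real.sqrt (‖θA‖ ^ 2 + ‖θB‖ ^ 2) ≤ 4 * G - 2)
    (hθ' : Real.sqrt (‖θA'‖ ^ 2 + ‖θB'‖ ^ 2) ≤ 4 * G - 2) :
    (∀ B : Finset (Fin n), B.card = s →
      Real.sqrt (∑ i ∈ B, ((⟪θA, xA i⟫ - 2 * y i) - (⟪θA', xA i⟫ - 2 * y i)) ^ 2) ≤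
        Real.sqrt s * Real.sqrt (‖θA - θA'‖ ^ 2 + ‖θB - θB'‖ ^ 2) ∧
      Real.sqrt (∑ i ∈ B, (⟪θB, xB i⟫ - ⟪θB', xB i⟫) ^ 2) ≤
        Real.sqrt s * Real.sqrt (‖θA - θA'‖ ^ 2 + ‖θB - θB'‖ ^ 2)) ∧
    (∀ (I : Finset (Fin n)) (p q : Fin n), p ∉ I → q ∉ I → p ≠ q →
      (insert p I).card = s →
      Real.sqrt ((∑ i ∈ I, ((⟪θA, xA i⟫ - 2 * y i) - (⟪θA', xA i⟫ - 2 * y i)) ^ 2) +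
          ((⟪θA, xA p⟫ - 2 * y p) - (⟪θA', xA q⟫ - 2 * y q)) ^ 2) ≤
        Real.sqrt (s * (‖θA - θA'‖ ^ 2 + ‖θB - θB'‖ ^ 2) + (8 * G) ^ 2) ∧
      Real.sqrt ((∑ i ∈ I, (⟪θB, xB i⟫ - ⟪θB', xB i⟫) ^ 2) +
          (⟪θB, xB p⟫ - ⟪θB', xB q⟫) ^ 2) ≤
        Real.sqrt (s * (‖θA - θA'‖ ^ 2 + ‖θB - θB'‖ ^ 2) + (8 * G - 4) ^ 2)) := by
  set M := ‖θA - θA'‖ ^ 2 + ‖θB - θB'‖ ^ 2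
  have hxA i : ‖xA i‖ ≤ 1 := norm_le_of_sqrt_sq_add_sq_le_left (hx i)
  have hxB i : ‖xB i‖ ≤ 1 := norm_le_of_sqrt_sq_add_sq_le_right (hx i)
  have termA i : ((⟪θA, xA i⟫ - 2 * y i) - (⟪θA', xA i⟫ - 2 * y i)) ^ 2 ≤ M := by
    rw [sub_sub_sub_cancel_right, ← inner_sub_left]
    exact (inner_sq_le_of_norm_le_one _ (hxA i)).trans (le_add_of_nonneg_right (by positivity))
  have termB i : (⟪θB, xB i⟫ - ⟪θB', xB i⟫) ^ 2 ≤ M := by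
    rw [← inner_sub_left]
    exact (inner_sq_le_of_norm_le_one _ (hxB i)).trans (le_add_of_nonneg_left (by positivity))
  refine ⟨fun B hB => ?_, fun I p q _ _ _ hI => ?_⟩
  · subst hB
    exact ⟨sqrt_sum_sq_le_sqrt_card_mul B _ fun i _ => termA i,
      sqrt_sum_sq_le_sqrt_card_mul B _ fun i _ => termB i⟩
  have hIs : #I ≤ s := hI ▸ card_le_card (subset_insert p I)
  have hM : 0 ≤ M := by positivity
  have crossA := abs_inner_sub_inner_le (norm_le_of_sqrt_sq_add_sq_le_left hθ)
    (norm_le_of_sqrt_sq_add_sq_le_left hθ') (hxA p) (hxA q)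
  have crossB := abs_inner_sub_inner_le (norm_le_of_sqrt_sq_add_sq_le_right hθ)
    (norm_le_of_sqrt_sq_add_sq_le_right hθ') (hxB p) (hxB q)
  refine ⟨sqrt_sum_sq_add_sq_le I _ hIs hM (fun i _ => termA i) ?_,
    sqrt_sum_sq_add_sq_le I _ hIs hM (fun i _ => termB i) (by linarith)⟩
  have hy2 := abs_sub_le_two_of_eq_one_or_eq_neg_one (hy p) (hy q)
  calc |(⟪θA, xA p⟫ - 2 * y p) - (⟪θA', xA q⟫ - 2 * y q)|
      = |(⟪θA, xA p⟫ - ⟪θA', xA q⟫) - 2 * (y p - y q)| := by ring_nf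
    _ ≤ |⟪θA, xA p⟫ - ⟪θA', xA q⟫| + 2 * |y p - y q| := by
        simpa only [abs_mul, abs_two] using abs_sub _ (2 * (y p - y q))
    _ ≤ 8 * G := by linarith

/-- Sensitivity bounds for the sensitive vectors `SV^A` and `SV^B`: on identical batches
they differ by at most `√s·‖θ - θ'‖₂`; on batches differing in exactly one index they
differ by at most `√(s‖θ - θ'‖₂² + (8G)²)` resp. `√(s‖θ - θ'‖₂² + (8G-4)²)`. -/
theorem stmt15 (dA dB n s : ℕ) (hs : 0 < s) (G : ℝ) (hG : 1 / 2 < G)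
    (xA : Fin n → EuclideanSpace ℝ (Fin dA)) (xB : Fin n → EuclideanSpace ℝ (Fin dB))
    (y : Fin n → ℝ) (hy : ∀ i, y i = 1 ∨ y i = -1)
    (hx : ∀ i, Real.sqrt (‖xA i‖ ^ 2 + ‖xB i‖ ^ 2) ≤ 1)
    (θA θA' : EuclideanSpace ℝ (Fin dA)) (θB θB' : EuclideanSpace ℝ (Fin dB))
    (hθ : Real.sqrt (‖θA‖ ^ 2 + ‖θB‖ ^ 2) ≤ 4 * G - 2)
    (hθ' : Real.sqrt (‖θA'‖ ^ 2 + ‖θB'‖ ^ 2) ≤ 4 * G - 2) :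
    (∀ B : Finset (Fin n), B.card = s →
      Real.sqrt (∑ i ∈ B, ((⟪θA, xA i⟫ - 2 * y i) - (⟪θA', xA i⟫ - 2 * y i)) ^ 2) ≤
        Real.sqrt s * Real.sqrt (‖θA - θA'‖ ^ 2 + ‖θB - θB'‖ ^ 2) ∧
      Real.sqrt (∑ i ∈ B, (⟪θB, xB i⟫ - ⟪θB', xB i⟫) ^ 2) ≤
        Real.sqrt s * Real.sqrt (‖θA - θA'‖ ^ 2 + ‖θB - θB'‖ ^ 2)) ∧
    (∀ (I : Finset (Fin n)) (p q : Fin n), p ∉ I → q ∉ I → p ≠ q →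
      (insert p I).card = s →
      Real.sqrt ((∑ i ∈ I, ((⟪θA, xA i⟫ - 2 * y i) - (⟪θA', xA i⟫ - 2 * y i)) ^ 2) +
          ((⟪θA, xA p⟫ - 2 * y p) - (⟪θA', xA q⟫ - 2 * y q)) ^ 2) ≤
        Real.sqrt (s * (‖θA - θA'‖ ^ 2 + ‖θB - θB'‖ ^ 2) + (8 * G) ^ 2) ∧
      Real.sqrt ((∑ i ∈ I, (⟪θB, xB i⟫ - ⟪θB', xB i⟫) ^ 2) +
          (⟪θB, xB p⟫ - ⟪θB', xB q⟫) ^ 2) ≤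
        Real.sqrt (s * (‖θA - θA'‖ ^ 2 + ‖θB - θB'‖ ^ 2) + (8 * G - 4) ^ 2)) :=
  stmt15_general dA dB n s G xA xB y hy hx θA θA' θB θB' hθ hθ'
end

section
/- Fix G > 1/2, 0 < η ≤ 1, and let two runs of mini-batch gradient descent on the Taylor-approximated logistic loss be performed on two datasets differing in at most one instance, with n = ms samples per epoch, batches of size s, e epochs, T = me total iterations, ‖x_i‖₂ ≤ 1, y_i ∈ {−1,1}, identical initialization, the same batch index sets (so in each epoch at most one batch pair differs, in exactly one index), per-sample gradients bounded in norm by G along both trajectories, and ‖θ_{t−1}‖₂ ≤ 4G − 2 along both trajectories. Then the concatenations over t ∈ {1,...,T} of the sensitive vectors satisfy ‖(SV^A_t)_{t∈[T]} − ((SV^A_t)')_{t∈[T]}‖₂ ≤ √(8G²e²Tη²/s + 64G²e) and ‖(SV^B_t)_{t∈[T]} − ((SV^B_t)')_{t∈[T]}‖₂ ≤ √(8G²e²Tη²/s + (8G−4)²e). -/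
/-!
Stack the two parties' parameters and features into the `L²` product `θ = (θᴬ, θᴮ)`,
`xᵢ = (xᴬᵢ, xᴮᵢ)`; the Taylor-approximated update is then a least-squares gradient step. On a
sample where the two datasets agree, the two runs' per-sample gradients differ by
`⟪θ - θ', xᵢ⟫ xᵢ`, so away from the differing sample the difference of the runs evolves by
`Δ ↦ (1 - c ∑ xᵢ xᵢᵀ) Δ`, a contraction because `c s = η / 4 ≤ 2`. The runs therefore separate
only in the at most `e` steps whose batch contains the differing sample, each time by at most
`c · 8G = 2ηG / s`, so `‖θₜ - θ'ₜ‖ ≤ 2ηGe / s` throughout. Each coordinate of `SVₜ - SV'ₜ` is at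
most this in absolute value, except the at most `e` coordinates at the differing sample, which
`‖θ‖ ≤ 4G - 2` bounds by `8G` (resp. `8G - 4`).
-/

open Finset
open scoped RealInnerProductSpace

section GradientStep

variable {ι E : Type*} [NormedAddCommGroup E] [InnerProductSpace ℝ E]

theorem abs_real_inner_le_norm_of_norm_le_one {x : E} (hx : ‖x‖ ≤ 1) (u : E) :
    |⟪u, x⟫| ≤ ‖u‖ :=
  (abs_real_inner_le_norm u x).trans (mul_le_of_le_one_right (norm_nonneg u) hx)

/-- `v ↦ v - c ∑ ⟪v, xᵢ⟫ xᵢ` is `1 - c A` with `0 ≤ A ≤ #S`, hence a contraction when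
`c #S ≤ 2`. -/
theorem norm_sub_smul_sum_inner_smul_le {S : Finset ι} {x : ι → E} (hx : ∀ i ∈ S, ‖x i‖ ≤ 1)
    {c : ℝ} (hc : 0 ≤ c) (hcS : c * #S ≤ 2) (v : E) :
    ‖v - c • ∑ i ∈ S, ⟪v, x i⟫ • x i‖ ≤ ‖v‖ := by
  set Q := ∑ i ∈ S, ⟪v, x i⟫ ^ 2
  have hQ : 0 ≤ Q := sum_nonneg fun i _ => sq_nonneg _
  have hinner : ⟪v, ∑ i ∈ S, ⟪v, x i⟫ • x i⟫ = Q := by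
    simp only [inner_sum, real_inner_smul_right, Q, sq]
  have hnorm : ‖∑ i ∈ S, ⟪v, x i⟫ • x i‖ ^ 2 ≤ #S * Q := by
    have hle : ‖∑ i ∈ S, ⟪v, x i⟫ • x i‖ ≤ ∑ i ∈ S, |⟪v, x i⟫| := by
      refine (norm_sum_le _ _).trans (sum_le_sum fun i hi => ?_)
      rw [norm_smul, Real.norm_eq_abs]
      exact mul_le_of_le_one_right (abs_nonneg _) (hx i hi)
    calc ‖∑ i ∈ S, ⟪v, x i⟫ • x i‖ ^ 2 ≤ (∑ i ∈ S, |⟪v, x i⟫|) ^ 2 := by gcongr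
      _ ≤ #S * ∑ i ∈ S, |⟪v, x i⟫| ^ 2 := sq_sum_le_card_mul_sum_sq
      _ = #S * Q := by simp only [sq_abs, Q]
  have hsq : ‖v - c • ∑ i ∈ S, ⟪v, x i⟫ • x i‖ ^ 2 ≤ ‖v‖ ^ 2 := by
    rw [norm_sub_sq_real, real_inner_smul_right, hinner, norm_smul, Real.norm_eq_abs, mul_pow,
      sq_abs]
    nlinarith [mul_le_mul_of_nonneg_left hnorm (sq_nonneg c), mul_le_mul_of_nonneg_right hcS hQ]
  exact pow_le_pow_iff_left₀ (norm_nonneg _) (norm_nonneg _) two_ne_zero |>.mp hsq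

/-- A mini-batch gradient step for the squared loss `½ (⟪θ, xᵢ⟫ - rᵢ)²`. The Taylor-approximated
logistic update is the case `rᵢ = 2 yᵢ`, `c = η / (4 s)`. -/
noncomputable def lsqGradStep (c : ℝ) (S : Finset ι) (x : ι → E) (r : ι → ℝ) (θ : E) : E :=
  θ - c • ∑ i ∈ S, (⟪θ, x i⟫ - r i) • x i

variable {c : ℝ} {S : Finset ι} {x x' : ι → E} {r r' : ι → ℝ}

theorem lsqGradStep_sub_lsqGradStep_of_forall_eq (h : ∀ i ∈ S, x i = x' i ∧ r i = r' i)
    (θ θ' : E) :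
    lsqGradStep c S x r θ - lsqGradStep c S x' r' θ' =
      (θ - θ') - c • ∑ i ∈ S, ⟪θ - θ', x i⟫ • x i := by
  have hterm : ∀ i ∈ S, (⟪θ, x i⟫ - r i) • x i - (⟪θ', x' i⟫ - r' i) • x' i =
      ⟪θ - θ', x i⟫ • x i := fun i hi => by
    rw [← (h i hi).1, ← (h i hi).2, ← sub_smul, inner_sub_left, sub_sub_sub_cancel_right]
  rw [← sum_congr rfl hterm, sum_sub_distrib, smul_sub, lsqGradStep, lsqGradStep]
  abel

theorem lsqGradStep_eq_erase_sub [DecidableEq ι] {i : ι} (hi : i ∈ S) (θ : E) :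
    lsqGradStep c S x r θ = lsqGradStep c (S.erase i) x r θ - c • (⟪θ, x i⟫ - r i) • x i := by
  rw [lsqGradStep, lsqGradStep, ← add_sum_erase S _ hi, smul_add]
  abel

theorem norm_lsqGradStep_sub_le [DecidableEq ι] (hx : ∀ i ∈ S, ‖x i‖ ≤ 1) (hc : 0 ≤ c)
    (hcS : c * #S ≤ 2) {i₀ : ι} (h : ∀ i ∈ S, i ≠ i₀ → x i = x' i ∧ r i = r' i) (θ θ' : E) :
    ‖lsqGradStep c S x r θ - lsqGradStep c S x' r' θ'‖ ≤ ‖θ - θ'‖ +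
      if i₀ ∈ S then c * (‖(⟪θ, x i₀⟫ - r i₀) • x i₀‖ + ‖(⟪θ', x' i₀⟫ - r' i₀) • x' i₀‖)
      else 0 := by
  split_ifs with hi₀
  · have hS' : c * #(S.erase i₀) ≤ 2 :=
      le_trans (mul_le_mul_of_nonneg_left (by exact_mod_cast card_erase_le) hc) hcS
    rw [lsqGradStep_eq_erase_sub hi₀, lsqGradStep_eq_erase_sub hi₀, sub_sub_sub_comm,
      lsqGradStep_sub_lsqGradStep_of_forall_eq fun i hi => h i (mem_of_mem_erase hi)
        (ne_of_mem_erase hi), ← smul_sub]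
    refine (norm_sub_le _ _).trans (add_le_add (norm_sub_smul_sum_inner_smul_le
      (fun i hi => hx i (mem_of_mem_erase hi)) hc hS' _) ?_)
    rw [norm_smul, Real.norm_of_nonneg hc]
    exact mul_le_mul_of_nonneg_left (norm_sub_le _ _) hc
  · rw [lsqGradStep_sub_lsqGradStep_of_forall_eq fun i hi => h i hi fun hii => hi₀ (hii ▸ hi),
      add_zero]
    exact norm_sub_smul_sum_inner_smul_le hx hc hcS _

theorem norm_sub_le_of_lsqGradStep [DecidableEq ι] {B : ℕ → Finset ι} {θ θ' : ℕ → E}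
    {T : ℕ} {K : ℝ} {i₀ : ι} (hx : ∀ i, ‖x i‖ ≤ 1) (hc : 0 ≤ c) (hcB : ∀ t, c * #(B t) ≤ 2)
    (h : ∀ i, i ≠ i₀ → x i = x' i ∧ r i = r' i)
    (hθ : ∀ t, 1 ≤ t → θ t = lsqGradStep c (B t) x r (θ (t - 1)))
    (hθ' : ∀ t, 1 ≤ t → θ' t = lsqGradStep c (B t) x' r' (θ' (t - 1))) (h0 : θ 0 = θ' 0)
    (hK : ∀ t, 1 ≤ t → t ≤ T → ‖(⟪θ (t - 1), x i₀⟫ - r i₀) • x i₀‖ ≤ K)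
    (hK' : ∀ t, 1 ≤ t → t ≤ T → ‖(⟪θ' (t - 1), x' i₀⟫ - r' i₀) • x' i₀‖ ≤ K) :
    ∀ t ≤ T, ‖θ t - θ' t‖ ≤ 2 * c * K * #{u ∈ Icc 1 t | i₀ ∈ B u} := by
  intro t
  induction t with
  | zero => simp [h0]
  | succ k ih =>
    intro hk
    have hstep := norm_lsqGradStep_sub_le (fun i _ => hx i) hc (hcB (k + 1))
      (fun i _ hi => h i hi) (θ k) (θ' k)
    have hθk := hθ (k + 1) le_add_self
    have hθk' := hθ' (k + 1) le_add_self
    rw [Nat.add_sub_cancel] at hθk hθk'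
    rw [← hθk, ← hθk'] at hstep
    rw [natCast_card_filter, sum_Icc_succ_top le_add_self, ← natCast_card_filter]
    split_ifs at hstep ⊢
    · have hgrad := add_le_add (hK (k + 1) le_add_self hk) (hK' (k + 1) le_add_self hk)
      rw [Nat.add_sub_cancel] at hgrad
      nlinarith [ih (by omega), mul_le_mul_of_nonneg_left hgrad hc]
    · simpa using hstep.trans (by simpa using ih (by omega))

end GradientStep

theorem card_filter_Icc_one_mul_le {p : ℕ → Prop} [DecidablePred p] {m e : ℕ}
    (h : ∀ k < e, #{t ∈ Icc (k * m + 1) (k * m + m) | p t} ≤ 1) :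
    #{t ∈ Icc 1 (m * e) | p t} ≤ e := by
  induction e with
  | zero => simp
  | succ k ih =>
    have hsplit : Icc 1 (m * (k + 1)) = Icc 1 (m * k) ∪ Icc (k * m + 1) (k * m + m) := by
      rw [mul_comm k, mul_add_one]
      ext t
      simp only [mem_union, mem_Icc]
      omega
    rw [hsplit, filter_union]
    exact (card_union_le _ _).trans
      (add_le_add (ih fun j hj => h j (by omega)) (h k (by omega)))

theorem sum_Icc_sum_le_of_le_ite {ι : Type*} [DecidableEq ι] {B : ℕ → Finset ι} {s T e : ℕ}
    {i₀ : ι} (hB : ∀ t, #(B t) ≤ s) (he : #{t ∈ Icc 1 T | i₀ ∈ B t} ≤ e) {f : ℕ → ι → ℝ}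
    {C D : ℝ} (hC : 0 ≤ C) (hD : 0 ≤ D)
    (hf : ∀ t ∈ Icc 1 T, ∀ i, f t i ≤ if i = i₀ then C else D) :
    ∑ t ∈ Icc 1 T, ∑ i ∈ B t, f t i ≤ T * s * D + C * e := by
  calc ∑ t ∈ Icc 1 T, ∑ i ∈ B t, f t i
      ≤ ∑ t ∈ Icc 1 T, ∑ i ∈ B t, (D + if i = i₀ then C else 0) := by
        refine sum_le_sum fun t ht => sum_le_sum fun i _ => ?_
        have hfti := hf t ht i
        split_ifs at hfti ⊢ <;> linarith
    _ = ∑ t ∈ Icc 1 T, (#(B t) * D + if i₀ ∈ B t then C else 0) := by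
        simp only [sum_add_distrib, sum_const, nsmul_eq_mul, sum_ite_eq']
    _ ≤ ∑ t ∈ Icc 1 T, (s * D + if i₀ ∈ B t then C else 0) := by
        gcongr with t
        exact_mod_cast hB t
    _ = T * s * D + C * #{t ∈ Icc 1 T | i₀ ∈ B t} := by
        rw [sum_add_distrib, sum_const, Nat.card_Icc, ← sum_filter, sum_const]
        simp only [nsmul_eq_mul, add_tsub_cancel_right, mul_assoc, mul_comm C]
    _ ≤ T * s * D + C * e := by gcongr

section TwoParty

variable {EA EB : Type*} [NormedAddCommGroup EA] [NormedAddCommGroup EB]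

theorem toLp_eq_lsqGradStep [InnerProductSpace ℝ EA] [InnerProductSpace ℝ EB] {ι : Type*}
    {c : ℝ} {S : Finset ι} {xA : ι → EA} {xB : ι → EB} {r : ι → ℝ} {a a' : EA} {b b' : EB}
    (ha : a' = a - c • ∑ i ∈ S, (⟪a, xA i⟫ + ⟪b, xB i⟫ - r i) • xA i)
    (hb : b' = b - c • ∑ i ∈ S, (⟪a, xA i⟫ + ⟪b, xB i⟫ - r i) • xB i) :
    WithLp.toLp 2 (a', b') =
      lsqGradStep c S (fun i => WithLp.toLp 2 (xA i, xB i)) r (WithLp.toLp 2 (a, b)) := by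
  refine (WithLp.ext_iff 2).mpr (Prod.ext ?_ ?_) <;>
    simp [lsqGradStep, ha, hb, Prod.fst_sum, Prod.snd_sum]

theorem norm_inner_toLp_sub_smul_toLp [InnerProductSpace ℝ EA] [InnerProductSpace ℝ EB]
    (a : EA) (b : EB) (p : EA) (q : EB) (r : ℝ) :
    ‖(⟪WithLp.toLp 2 (a, b), WithLp.toLp 2 (p, q)⟫ - r) • WithLp.toLp 2 (p, q)‖ =
      |⟪a, p⟫ + ⟪b, q⟫ - r| * √(‖p‖ ^ 2 + ‖q‖ ^ 2) := by
  rw [norm_smul, WithLp.prod_inner_apply, WithLp.prod_norm_eq_of_L2, Real.norm_eq_abs]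
  rfl

variable {u u' x x' : WithLp 2 (EA × EB)} {R δ : ℝ} {P : Prop} [Decidable P]

theorem sq_inner_fst_sub_le_ite [InnerProductSpace ℝ EA] {y y' : ℝ} (hx : ‖x‖ ≤ 1)
    (hx' : ‖x'‖ ≤ 1) (hy : |y| ≤ 1) (hy' : |y'| ≤ 1) (hu : ‖u‖ ≤ R) (hu' : ‖u'‖ ≤ R)
    (hδ : ‖u - u'‖ ≤ δ) (h : ¬P → x.fst = x'.fst ∧ y = y') :
    ((⟪u.fst, x.fst⟫ - 2 * y) - (⟪u'.fst, x'.fst⟫ - 2 * y')) ^ 2 ≤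
      if P then (2 * R + 4) ^ 2 else δ ^ 2 := by
  split_ifs with hP
  · have ha := abs_le.mp ((abs_real_inner_le_norm_of_norm_le_one
      ((WithLp.norm_fst_le _ x).trans hx) _).trans ((WithLp.norm_fst_le _ u).trans hu))
    have ha' := abs_le.mp ((abs_real_inner_le_norm_of_norm_le_one
      ((WithLp.norm_fst_le _ x').trans hx') _).trans ((WithLp.norm_fst_le _ u').trans hu'))
    have hb := abs_le.mp hy
    have hb' := abs_le.mp hy'
    exact sq_le_sq' (by linarith) (by linarith)
  · obtain ⟨hxx, hyy⟩ := h hP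
    rw [hxx, hyy, sub_sub_sub_cancel_right, ← inner_sub_left, ← sq_abs, ← WithLp.sub_fst]
    exact pow_le_pow_left₀ (abs_nonneg _) ((abs_real_inner_le_norm_of_norm_le_one
      ((WithLp.norm_fst_le _ x').trans hx') _).trans ((WithLp.norm_fst_le _ _).trans hδ)) 2

theorem sq_inner_snd_sub_le_ite [InnerProductSpace ℝ EB] (hx : ‖x‖ ≤ 1) (hx' : ‖x'‖ ≤ 1)
    (hu : ‖u‖ ≤ R) (hu' : ‖u'‖ ≤ R) (hδ : ‖u - u'‖ ≤ δ) (h : ¬P → x.snd = x'.snd) :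
    (⟪u.snd, x.snd⟫ - ⟪u'.snd, x'.snd⟫) ^ 2 ≤ if P then (2 * R) ^ 2 else δ ^ 2 := by
  split_ifs with hP
  · have ha := abs_le.mp ((abs_real_inner_le_norm_of_norm_le_one
      ((WithLp.norm_snd_le _ x).trans hx) _).trans ((WithLp.norm_snd_le _ u).trans hu))
    have ha' := abs_le.mp ((abs_real_inner_le_norm_of_norm_le_one
      ((WithLp.norm_snd_le _ x').trans hx') _).trans ((WithLp.norm_snd_le _ u').trans hu'))
    exact sq_le_sq' (by linarith) (by linarith)
  · rw [h hP, ← inner_sub_left, ← sq_abs, ← WithLp.sub_snd]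
    exact pow_le_pow_left₀ (abs_nonneg _) ((abs_real_inner_le_norm_of_norm_le_one
      ((WithLp.norm_snd_le _ x').trans hx') _).trans ((WithLp.norm_snd_le _ _).trans hδ)) 2

end TwoParty

theorem stmt16_general (dA dB m s e : ℕ) (hs : 0 < s)
    (n T : ℕ) (hT : T = m * e)
    (G η : ℝ) (hG : 1 / 2 < G) (hη0 : 0 < η) (hη1 : η ≤ 1)
    (xA xA' : Fin n → EuclideanSpace ℝ (Fin dA))
    (xB xB' : Fin n → EuclideanSpace ℝ (Fin dB))
    (y y' : Fin n → ℝ)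
    (hy : ∀ i, y i = 1 ∨ y i = -1) (hy' : ∀ i, y' i = 1 ∨ y' i = -1)
    (hx : ∀ i, Real.sqrt (‖xA i‖ ^ 2 + ‖xB i‖ ^ 2) ≤ 1)
    (hx' : ∀ i, Real.sqrt (‖xA' i‖ ^ 2 + ‖xB' i‖ ^ 2) ≤ 1)
    (i0 : Fin n)
    (hdiff : ∀ i, i ≠ i0 → xA i = xA' i ∧ xB i = xB' i ∧ y i = y' i)
    (B : ℕ → Finset (Fin n)) (hB : ∀ t, (B t).card = s)
    (hepoch : ∀ ep : ℕ, ep < e →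
      ((Finset.Icc (ep * m + 1) (ep * m + m)).filter fun t => i0 ∈ B t).card ≤ 1)
    (θA θA' : ℕ → EuclideanSpace ℝ (Fin dA))
    (θB θB' : ℕ → EuclideanSpace ℝ (Fin dB))
    (hinitA : θA 0 = θA' 0) (hinitB : θB 0 = θB' 0)
    (hupdA : ∀ t : ℕ, 1 ≤ t → θA t = θA (t - 1) - (η / (4 * s)) •
      ∑ i ∈ B t, (⟪θA (t - 1), xA i⟫ + ⟪θB (t - 1), xB i⟫ - 2 * y i) • xA i)
    (hupdB : ∀ t : ℕ, 1 ≤ t → θB t = θB (t - 1) - (η / (4 * s)) •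
      ∑ i ∈ B t, (⟪θA (t - 1), xA i⟫ + ⟪θB (t - 1), xB i⟫ - 2 * y i) • xB i)
    (hupdA' : ∀ t : ℕ, 1 ≤ t → θA' t = θA' (t - 1) - (η / (4 * s)) •
      ∑ i ∈ B t, (⟪θA' (t - 1), xA' i⟫ + ⟪θB' (t - 1), xB' i⟫ - 2 * y' i) • xA' i)
    (hupdB' : ∀ t : ℕ, 1 ≤ t → θB' t = θB' (t - 1) - (η / (4 * s)) •
      ∑ i ∈ B t, (⟪θA' (t - 1), xA' i⟫ + ⟪θB' (t - 1), xB' i⟫ - 2 * y' i) • xB' i)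
    (hgrad : ∀ t : ℕ, 1 ≤ t → t ≤ T → ∀ i,
      (1 / 4) * |⟪θA (t - 1), xA i⟫ + ⟪θB (t - 1), xB i⟫ - 2 * y i| *
        Real.sqrt (‖xA i‖ ^ 2 + ‖xB i‖ ^ 2) ≤ G)
    (hgrad' : ∀ t : ℕ, 1 ≤ t → t ≤ T → ∀ i,
      (1 / 4) * |⟪θA' (t - 1), xA' i⟫ + ⟪θB' (t - 1), xB' i⟫ - 2 * y' i| *
        Real.sqrt (‖xA' i‖ ^ 2 + ‖xB' i‖ ^ 2) ≤ G)
    (hbound : ∀ t : ℕ, 1 ≤ t → t ≤ T →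
      Real.sqrt (‖θA (t - 1)‖ ^ 2 + ‖θB (t - 1)‖ ^ 2) ≤ 4 * G - 2)
    (hbound' : ∀ t : ℕ, 1 ≤ t → t ≤ T →
      Real.sqrt (‖θA' (t - 1)‖ ^ 2 + ‖θB' (t - 1)‖ ^ 2) ≤ 4 * G - 2) :
    Real.sqrt (∑ t ∈ Finset.Icc 1 T, ∑ i ∈ B t,
        ((⟪θA (t - 1), xA i⟫ - 2 * y i) - (⟪θA' (t - 1), xA' i⟫ - 2 * y' i)) ^ 2) ≤
      Real.sqrt (8 * G ^ 2 * e ^ 2 * T * η ^ 2 / s + 64 * G ^ 2 * e) ∧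
    Real.sqrt (∑ t ∈ Finset.Icc 1 T, ∑ i ∈ B t,
        (⟪θB (t - 1), xB i⟫ - ⟪θB' (t - 1), xB' i⟫) ^ 2) ≤
      Real.sqrt (8 * G ^ 2 * e ^ 2 * T * η ^ 2 / s + (8 * G - 4) ^ 2 * e) := by
  set c := η / (4 * s) with hc
  set Θ := fun t : ℕ => WithLp.toLp 2 (θA t, θB t)
  set Θ' := fun t : ℕ => WithLp.toLp 2 (θA' t, θB' t)
  set X := fun i : Fin n => WithLp.toLp 2 (xA i, xB i)
  set X' := fun i : Fin n => WithLp.toLp 2 (xA' i, xB' i)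
  have hX : ∀ i, ‖X i‖ ≤ 1 := fun i => (WithLp.prod_norm_eq_of_L2 _).trans_le (hx i)
  have hX' : ∀ i, ‖X' i‖ ≤ 1 := fun i => (WithLp.prod_norm_eq_of_L2 _).trans_le (hx' i)
  have hR : ∀ t ∈ Icc 1 T, ‖Θ (t - 1)‖ ≤ 4 * G - 2 := fun t ht =>
    (WithLp.prod_norm_eq_of_L2 _).trans_le (hbound t (mem_Icc.mp ht).1 (mem_Icc.mp ht).2)
  have hR' : ∀ t ∈ Icc 1 T, ‖Θ' (t - 1)‖ ≤ 4 * G - 2 := fun t ht =>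
    (WithLp.prod_norm_eq_of_L2 _).trans_le (hbound' t (mem_Icc.mp ht).1 (mem_Icc.mp ht).2)
  have hc0 : 0 ≤ c := by positivity
  have hcB : ∀ t, c * #(B t) ≤ 2 := fun t => by
    rw [hB, hc, div_mul_eq_mul_div, div_le_iff₀ (by positivity)]
    nlinarith
  have hK : ∀ t, 1 ≤ t → t ≤ T → ‖(⟪Θ (t - 1), X i0⟫ - 2 * y i0) • X i0‖ ≤ 4 * G :=
    fun t h1 h2 => (norm_inner_toLp_sub_smul_toLp ..).trans_le (by linarith [hgrad t h1 h2 i0])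
  have hK' : ∀ t, 1 ≤ t → t ≤ T → ‖(⟪Θ' (t - 1), X' i0⟫ - 2 * y' i0) • X' i0‖ ≤ 4 * G :=
    fun t h1 h2 => (norm_inner_toLp_sub_smul_toLp ..).trans_le (by linarith [hgrad' t h1 h2 i0])
  have hcount : #{t ∈ Icc 1 T | i0 ∈ B t} ≤ e := hT ▸ card_filter_Icc_one_mul_le hepoch
  have hΔ : ∀ t ∈ Icc 1 T, ‖Θ (t - 1) - Θ' (t - 1)‖ ≤ 2 * c * (4 * G) * e := by
    intro t ht
    rw [mem_Icc] at ht
    refine (norm_sub_le_of_lsqGradStep hX hc0 hcB (fun i hi => ?_)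
      (fun t ht => toLp_eq_lsqGradStep (hupdA t ht) (hupdB t ht))
      (fun t ht => toLp_eq_lsqGradStep (hupdA' t ht) (hupdB' t ht))
      (congrArg (WithLp.toLp 2) (Prod.ext hinitA hinitB)) hK hK' (t - 1) (by omega)).trans ?_
    · obtain ⟨hA, hB, hy⟩ := hdiff i hi
      exact ⟨congrArg (WithLp.toLp 2) (Prod.ext hA hB), by rw [hy]⟩
    · gcongr
      refine le_trans ?_ hcount
      exact_mod_cast card_le_card (filter_subset_filter _ (Icc_subset_Icc_right (by omega)))
  have hy1 : ∀ i, |y i| ≤ 1 := fun i => by rcases hy i with h | h <;> simp [h]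
  have hy1' : ∀ i, |y' i| ≤ 1 := fun i => by rcases hy' i with h | h <;> simp [h]
  have hrhs : ∀ C C' : ℝ, C ≤ C' →
      T * s * (2 * c * (4 * G) * e) ^ 2 + C * e ≤ 8 * G ^ 2 * e ^ 2 * T * η ^ 2 / s + C' * e := by
    intro C C' hC
    have hs' : (s : ℝ) ≠ 0 := by positivity
    calc T * s * (2 * c * (4 * G) * e) ^ 2 + C * e
        = 4 * G ^ 2 * e ^ 2 * T * η ^ 2 / s + C * e := by rw [hc]; field_simp; ring
      _ ≤ 8 * G ^ 2 * e ^ 2 * T * η ^ 2 / s + C' * e := by gcongr; norm_num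
  constructor
  · refine Real.sqrt_le_sqrt ((sum_Icc_sum_le_of_le_ite (fun t => (hB t).le) hcount
      (by positivity) (by positivity) fun t ht i => sq_inner_fst_sub_le_ite (hX i) (hX' i)
      (hy1 i) (hy1' i) (hR t ht) (hR' t ht) (hΔ t ht)
      fun hi => ⟨(hdiff i hi).1, (hdiff i hi).2.2⟩).trans (hrhs _ _ (le_of_eq (by ring))))
  · refine Real.sqrt_le_sqrt ((sum_Icc_sum_le_of_le_ite (fun t => (hB t).le) hcount
      (by positivity) (by positivity) fun t ht i => sq_inner_snd_sub_le_ite (hX i) (hX' i)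
      (hR t ht) (hR' t ht) (hΔ t ht) fun hi => (hdiff i hi).2.1).trans
      (hrhs _ _ (le_of_eq (by ring))))

/-- ℓ₂-sensitivity over the whole training horizon of the concatenated sensitive vectors
`SV^A` and `SV^B` for two runs of mini-batch gradient descent on datasets differing in
at most one instance. -/
theorem stmt16 (dA dB m s e : ℕ) (hm : 0 < m) (hs : 0 < s) (he : 0 < e)
    (n T : ℕ) (hn : n = m * s) (hT : T = m * e)
    (G η : ℝ) (hG : 1 / 2 < G) (hη0 : 0 < η) (hη1 : η ≤ 1)
    (xA xA' : Fin n → EuclideanSpace ℝ (Fin dA))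
    (xB xB' : Fin n → EuclideanSpace ℝ (Fin dB))
    (y y' : Fin n → ℝ)
    (hy : ∀ i, y i = 1 ∨ y i = -1) (hy' : ∀ i, y' i = 1 ∨ y' i = -1)
    (hx : ∀ i, Real.sqrt (‖xA i‖ ^ 2 + ‖xB i‖ ^ 2) ≤ 1)
    (hx' : ∀ i, Real.sqrt (‖xA' i‖ ^ 2 + ‖xB' i‖ ^ 2) ≤ 1)
    (i0 : Fin n)
    (hdiff : ∀ i, i ≠ i0 → xA i = xA' i ∧ xB i = xB' i ∧ y i = y' i)
    (B : ℕ → Finset (Fin n)) (hB : ∀ t, (B t).card = s)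
    (hepoch : ∀ ep : ℕ, ep < e →
      ((Finset.Icc (ep * m + 1) (ep * m + m)).filter fun t => i0 ∈ B t).card ≤ 1)
    (θA θA' : ℕ → EuclideanSpace ℝ (Fin dA))
    (θB θB' : ℕ → EuclideanSpace ℝ (Fin dB))
    (hinitA : θA 0 = θA' 0) (hinitB : θB 0 = θB' 0)
    (hupdA : ∀ t : ℕ, 1 ≤ t → θA t = θA (t - 1) - (η / (4 * s)) •
      ∑ i ∈ B t, (⟪θA (t - 1), xA i⟫ + ⟪θB (t - 1), xB i⟫ - 2 * y i) • xA i)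
    (hupdB : ∀ t : ℕ, 1 ≤ t → θB t = θB (t - 1) - (η / (4 * s)) •
      ∑ i ∈ B t, (⟪θA (t - 1), xA i⟫ + ⟪θB (t - 1), xB i⟫ - 2 * y i) • xB i)
    (hupdA' : ∀ t : ℕ, 1 ≤ t → θA' t = θA' (t - 1) - (η / (4 * s)) •
      ∑ i ∈ B t, (⟪θA' (t - 1), xA' i⟫ + ⟪θB' (t - 1), xB' i⟫ - 2 * y' i) • xA' i)
    (hupdB' : ∀ t : ℕ, 1 ≤ t → θB' t = θB' (t - 1) - (η / (4 * s)) •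
      ∑ i ∈ B t, (⟪θA' (t - 1), xA' i⟫ + ⟪θB' (t - 1), xB' i⟫ - 2 * y' i) • xB' i)
    (hgrad : ∀ t : ℕ, 1 ≤ t → t ≤ T → ∀ i,
      (1 / 4) * |⟪θA (t - 1), xA i⟫ + ⟪θB (t - 1), xB i⟫ - 2 * y i| *
        Real.sqrt (‖xA i‖ ^ 2 + ‖xB i‖ ^ 2) ≤ G)
    (hgrad' : ∀ t : ℕ, 1 ≤ t → t ≤ T → ∀ i,
      (1 / 4) * |⟪θA' (t - 1), xA' i⟫ + ⟪θB' (t - 1), xB' i⟫ - 2 * y' i| *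
        Real.sqrt (‖xA' i‖ ^ 2 + ‖xB' i‖ ^ 2) ≤ G)
    (hbound : ∀ t : ℕ, 1 ≤ t → t ≤ T →
      Real.sqrt (‖θA (t - 1)‖ ^ 2 + ‖θB (t - 1)‖ ^ 2) ≤ 4 * G - 2)
    (hbound' : ∀ t : ℕ, 1 ≤ t → t ≤ T →
      Real.sqrt (‖θA' (t - 1)‖ ^ 2 + ‖θB' (t - 1)‖ ^ 2) ≤ 4 * G - 2) :
    Real.sqrt (∑ t ∈ Finset.Icc 1 T, ∑ i ∈ B t,
        ((⟪θA (t - 1), xA i⟫ - 2 * y i) - (⟪θA' (t - 1), xA' i⟫ - 2 * y' i)) ^ 2) ≤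
      Real.sqrt (8 * G ^ 2 * e ^ 2 * T * η ^ 2 / s + 64 * G ^ 2 * e) ∧
    Real.sqrt (∑ t ∈ Finset.Icc 1 T, ∑ i ∈ B t,
        (⟪θB (t - 1), xB i⟫ - ⟪θB' (t - 1), xB' i⟫) ^ 2) ≤
      Real.sqrt (8 * G ^ 2 * e ^ 2 * T * η ^ 2 / s + (8 * G - 4) ^ 2 * e) :=
  stmt16_general dA dB m s e hs n T hT G η hG hη0 hη1 xA xA' xB xB' y y' hy hy' hx hx' i0 hdiff B hB
    hepoch θA θA' θB θB' hinitA hinitB hupdA hupdB hupdA' hupdB' hgrad hgrad' hbound hbound'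
end

section
/- Let x_1,...,x_n ∈ ℝ^d with ‖x_i‖₂ ≤ 1, y_i ∈ {−1,1}, and suppose the iterates follow mini-batch gradient descent under the degree-3 minimax approximation of the sigmoid: θ_t = θ_{t−1} − (η/s) Σ_{i∈B_t} [−0.004(θ_{t−1}ᵀx_i)³ + 0.197·θ_{t−1}ᵀx_i − 0.5y_i] x_i, with constant learning rate η > 0 and batches B_t of size s. If max_{1≤i≤n} |θ_0ᵀx_i| = ε < 2, then for every iteration t with 1 ≤ t ≤ T̄_ε := ⌈log_{1+η/4}(5.2/(2+ε))⌉ and every i ∈ {1,...,n}, |θ_{t−1}ᵀx_i| < 3.2; consequently, since |−0.004z³ + 0.197z| < 0.5 for |z| < 3.2, the coefficient f_{i,t} := −0.004(θ_{t−1}ᵀx_i)³ + 0.197·θ_{t−1}ᵀx_i − 0.5y_i satisfies sign(f_{i,t}) = −y_i for all i ∈ B_t. -/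
/-!
While every `|θᵀxᵢ|` stays below `10`, the cubic part of the gradient coefficient is at most
`|z|/4` and the label part is `1/2`, so each coefficient is bounded by `(|z| + 2)/4`. A gradient
step therefore multiplies `maxᵢ |θᵀxᵢ| + 2` by at most `1 + η/4`, and after fewer than
`log_{1+η/4}(5.2/(2+ε))` steps this quantity is still below `5.2`. On `|z| < 3.2` the cubic stays
below `1/2` in absolute value, so the label term decides the sign of the coefficient.
-/

open Finset
open scoped RealInnerProductSpace

noncomputable section

/-- The degree-3 minimax approximation of the sigmoid, without its constant term `1/2`. -/
def minimaxCubic (z : ℝ) : ℝ := -0.004 * z ^ 3 + 0.197 * z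

/-- The coefficient `f_{i,t}` with `z = θ_{t-1}ᵀxᵢ` and `y = yᵢ`. -/
def minimaxCoeff (z y : ℝ) : ℝ := minimaxCubic z - 0.5 * y

def minimaxStep {E ι : Type*} [NormedAddCommGroup E] [InnerProductSpace ℝ E]
    (η : ℝ) (B : Finset ι) (x : ι → E) (y : ι → ℝ) (θ : E) : E :=
  θ - (η / #B) • ∑ i ∈ B, minimaxCoeff ⟪θ, x i⟫ (y i) • x i

end

lemma abs_minimaxCubic_le {z : ℝ} (hz : |z| ≤ 10) : |minimaxCubic z| ≤ |z| / 4 := by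
  have hz2 : z ^ 2 ≤ 100 := by nlinarith [sq_abs z, abs_nonneg z]
  have hfactor : |0.197 - 0.004 * z ^ 2| ≤ 1 / 4 := by
    rw [abs_le]; constructor <;> nlinarith [sq_nonneg z]
  calc |minimaxCubic z| = |z| * |0.197 - 0.004 * z ^ 2| := by
        rw [← abs_mul, minimaxCubic]; ring_nf
    _ ≤ |z| * (1 / 4) := mul_le_mul_of_nonneg_left hfactor (abs_nonneg z)
    _ = |z| / 4 := by ring

lemma abs_minimaxCubic_lt_half {z : ℝ} (hz : |z| < 3.2) : |minimaxCubic z| < 1 / 2 := by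
  obtain ⟨hl, hr⟩ := abs_lt.mp hz
  have hq₁ : 0 < 39.01 - z ^ 2 - 3.2 * z := by nlinarith
  have hq₂ : 0 < 39.01 - z ^ 2 + 3.2 * z := by nlinarith
  -- `1/2 ∓ minimaxCubic z = 0.004 ((3.2 ∓ z)(39.01 - z² ∓ 3.2 z) + 0.168)`
  rw [minimaxCubic, abs_lt]
  constructor
  · nlinarith [mul_pos (show 0 < 3.2 + z by linarith) hq₂]
  · nlinarith [mul_pos (show 0 < 3.2 - z by linarith) hq₁]

lemma abs_minimaxCoeff_le {z y : ℝ} (hz : |z| ≤ 10) (hy : |y| = 1) :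
    |minimaxCoeff z y| ≤ (|z| + 2) / 4 :=
  calc |minimaxCoeff z y| ≤ |minimaxCubic z| + |0.5 * y| := abs_sub _ _
    _ ≤ |z| / 4 + 1 / 2 := by
        rw [abs_mul, hy, abs_of_pos (by norm_num : (0 : ℝ) < 0.5)]
        linarith [abs_minimaxCubic_le hz]
    _ = (|z| + 2) / 4 := by ring

lemma sign_minimaxCoeff {z y : ℝ} (hz : |z| < 3.2) (hy : y = 1 ∨ y = -1) :
    Real.sign (minimaxCoeff z y) = -y := by
  obtain ⟨hl, hr⟩ := abs_lt.mp (abs_minimaxCubic_lt_half hz)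
  rcases hy with rfl | rfl
  · exact Real.sign_of_neg (by rw [minimaxCoeff]; linarith)
  · rw [neg_neg]; exact Real.sign_of_pos (by rw [minimaxCoeff]; linarith)

section GradientStep

variable {E ι : Type*} [NormedAddCommGroup E] [InnerProductSpace ℝ E]

lemma norm_sum_smul_le_card_mul {B : Finset ι} {x : ι → E} {c : ι → ℝ} {K : ℝ}
    (hx : ∀ i ∈ B, ‖x i‖ ≤ 1) (hc : ∀ i ∈ B, |c i| ≤ K) :
    ‖∑ i ∈ B, c i • x i‖ ≤ #B * K :=
  calc ‖∑ i ∈ B, c i • x i‖ ≤ ∑ i ∈ B, ‖c i • x i‖ := norm_sum_le _ _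
    _ ≤ ∑ _i ∈ B, K := sum_le_sum fun i hi => by
        rw [norm_smul, Real.norm_eq_abs]
        calc |c i| * ‖x i‖ ≤ K * 1 :=
              mul_le_mul (hc i hi) (hx i hi) (norm_nonneg _) ((abs_nonneg _).trans (hc i hi))
          _ = K := mul_one K
    _ = #B * K := by rw [sum_const, nsmul_eq_mul]

lemma abs_inner_sub_le {θ w v : E} (hv : ‖v‖ ≤ 1) : |⟪θ - w, v⟫| ≤ |⟪θ, v⟫| + ‖w‖ :=
  calc |⟪θ - w, v⟫| ≤ |⟪θ, v⟫| + |⟪w, v⟫| := by rw [inner_sub_left]; exact abs_sub _ _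
    _ ≤ |⟪θ, v⟫| + ‖w‖ := by
        gcongr
        calc |⟪w, v⟫| ≤ ‖w‖ * ‖v‖ := abs_real_inner_le_norm w v
          _ ≤ ‖w‖ * 1 := mul_le_mul_of_nonneg_left hv (norm_nonneg w)
          _ = ‖w‖ := mul_one _

variable {x : ι → E} {y : ι → ℝ} {η : ℝ}

lemma abs_inner_minimaxStep_add_two_le (hx : ∀ i, ‖x i‖ ≤ 1) (hy : ∀ i, |y i| = 1)
    (hη : 0 ≤ η) (B : Finset ι) {θ : E} {C : ℝ} (hC : C ≤ 12)
    (hθ : ∀ i, |⟪θ, x i⟫| + 2 ≤ C) (j : ι) :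
    |⟪minimaxStep η B x y θ, x j⟫| + 2 ≤ (1 + η / 4) * C := by
  have hcoeff : ∀ i ∈ B, |minimaxCoeff ⟪θ, x i⟫ (y i)| ≤ C / 4 := fun i _ =>
    (abs_minimaxCoeff_le (by linarith [hθ i]) (hy i)).trans (by linarith [hθ i])
  have hdrift : ‖(η / #B) • ∑ i ∈ B, minimaxCoeff ⟪θ, x i⟫ (y i) • x i‖ ≤ η * (C / 4) := by
    rw [norm_smul, Real.norm_of_nonneg (by positivity)]
    calc η / #B * ‖∑ i ∈ B, minimaxCoeff ⟪θ, x i⟫ (y i) • x i‖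
        ≤ η / #B * (#B * (C / 4)) := by
          gcongr; exact norm_sum_smul_le_card_mul (fun i _ => hx i) hcoeff
      _ ≤ η * (C / 4) := by
          rcases (#B).eq_zero_or_pos with hB | hB
          · simp only [hB, Nat.cast_zero, div_zero, zero_mul]
            exact mul_nonneg hη (by linarith [hθ j, abs_nonneg ⟪θ, x j⟫])
          · rw [← mul_assoc, div_mul_cancel₀ η (by positivity)]
  have hinner := abs_inner_sub_le (θ := θ)
    (w := (η / #B) • ∑ i ∈ B, minimaxCoeff ⟪θ, x i⟫ (y i) • x i) (hx j)
  rw [minimaxStep]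
  linarith [hθ j]

lemma abs_inner_minimaxStep_iterate_le (hx : ∀ i, ‖x i‖ ≤ 1) (hy : ∀ i, |y i| = 1)
    (hη : 0 ≤ η) (B : ℕ → Finset ι) (θ : ℕ → E)
    (hθ : ∀ t, θ (t + 1) = minimaxStep η (B (t + 1)) x y (θ t))
    {ε : ℝ} (h₀ : ∀ i, |⟪θ 0, x i⟫| ≤ ε) :
    ∀ t, (1 + η / 4) ^ t * (2 + ε) ≤ 12 → ∀ i, |⟪θ t, x i⟫| + 2 ≤ (1 + η / 4) ^ t * (2 + ε) := by
  intro t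
  induction t with
  | zero => intro _ i; linarith [h₀ i, pow_zero (1 + η / 4)]
  | succ t ih =>
    intro hbound i
    have hmono : (1 + η / 4) ^ t * (2 + ε) ≤ (1 + η / 4) ^ (t + 1) * (2 + ε) := by
      have h2ε : 0 ≤ 2 + ε := by linarith [h₀ i, abs_nonneg ⟪θ 0, x i⟫]
      gcongr
      · linarith
      · omega
    rw [hθ, pow_succ, mul_comm _ (1 + η / 4), mul_assoc]
    exact abs_inner_minimaxStep_add_two_le hx hy hη _ (hmono.trans hbound)
      (ih (hmono.trans hbound)) i

end GradientStep

lemma pow_mul_lt_of_lt_ceil_logb {q a c : ℝ} (hq : 1 < q) (ha : 0 < a) (hc : 0 < c) {k : ℕ}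
    (hk : (k : ℤ) < ⌈Real.logb q (c / a)⌉) : q ^ k * a < c := by
  have hk' : (k : ℝ) < Real.logb q (c / a) := by exact_mod_cast Int.lt_ceil.mp hk
  rw [Real.lt_logb_iff_rpow_lt hq (div_pos hc ha), Real.rpow_natCast, lt_div_iff₀ ha] at hk'
  exact hk'

theorem stmt17_general (d n s : ℕ)
    (x : Fin n → EuclideanSpace ℝ (Fin d)) (hx : ∀ i, ‖x i‖ ≤ 1)
    (y : Fin n → ℝ) (hy : ∀ i, y i = 1 ∨ y i = -1)
    (B : ℕ → Finset (Fin n)) (hB : ∀ t, (B t).card = s)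
    (η : ℝ) (hη : 0 < η)
    (θ : ℕ → EuclideanSpace ℝ (Fin d))
    (hupd : ∀ t : ℕ, 1 ≤ t →
      θ t = θ (t - 1) - (η / s) •
        ∑ i ∈ B t,
          (-0.004 * (⟪θ (t - 1), x i⟫) ^ 3 + 0.197 * ⟪θ (t - 1), x i⟫ - 0.5 * y i) • x i)
    (ε : ℝ) (hε : (⨆ i, |⟪θ 0, x i⟫|) = ε) :
    ∀ t : ℕ, 1 ≤ t → (t : ℤ) ≤ ⌈Real.logb (1 + η / 4) (5.2 / (2 + ε))⌉ →
      (∀ i, |⟪θ (t - 1), x i⟫| < 3.2) ∧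
      ∀ i ∈ B t,
        Real.sign
          (-0.004 * (⟪θ (t - 1), x i⟫) ^ 3 + 0.197 * ⟪θ (t - 1), x i⟫ - 0.5 * y i) =
          -y i := by
  intro t ht htle
  have hε₀ : 0 ≤ ε := hε ▸ Real.iSup_nonneg fun _ => abs_nonneg _
  have h₀ : ∀ i, |⟪θ 0, x i⟫| ≤ ε := fun i => hε ▸ le_ciSup (f := fun i => |⟪θ 0, x i⟫|) (Set.finite_range _).bddAbove i
  have hstep : ∀ t, θ (t + 1) = minimaxStep η (B (t + 1)) x y (θ t) := fun t => by
    rw [hupd (t + 1) (by omega), Nat.add_sub_cancel, ← hB (t + 1)]; rfl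
  have hgrowth : (1 + η / 4) ^ (t - 1) * (2 + ε) < 5.2 :=
    pow_mul_lt_of_lt_ceil_logb (by linarith) (by linarith) (by norm_num) (by omega)
  have hbound : ∀ i, |⟪θ (t - 1), x i⟫| < 3.2 := fun i => by
    have := abs_inner_minimaxStep_iterate_le hx (fun i => by rcases hy i with h | h <;> simp [h])
      hη.le B θ hstep h₀ (t - 1) (by linarith) i
    linarith
  exact ⟨hbound, fun i _ => sign_minimaxCoeff (hbound i) (hy i)⟩

/-- Label recovery under the degree-3 minimax approximation of the sigmoid: if
`max_i |θ_0ᵀx_i| = ε < 2`, then for all `1 ≤ t ≤ ⌈log_{1+η/4}(5.2/(2+ε))⌉` one has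
`|θ_{t-1}ᵀx_i| < 3.2` for all `i`, and consequently the coefficients
`f_{i,t} = -0.004(θ_{t-1}ᵀx_i)³ + 0.197 θ_{t-1}ᵀx_i - 0.5 y_i` satisfy
`sign(f_{i,t}) = -y_i` for `i` in the batch. -/
theorem stmt17 (d n s : ℕ) (hn : 0 < n) (hs : 0 < s)
    (x : Fin n → EuclideanSpace ℝ (Fin d)) (hx : ∀ i, ‖x i‖ ≤ 1)
    (y : Fin n → ℝ) (hy : ∀ i, y i = 1 ∨ y i = -1)
    (B : ℕ → Finset (Fin n)) (hB : ∀ t, (B t).card = s)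
    (η : ℝ) (hη : 0 < η)
    (θ : ℕ → EuclideanSpace ℝ (Fin d))
    (hupd : ∀ t : ℕ, 1 ≤ t →
      θ t = θ (t - 1) - (η / s) •
        ∑ i ∈ B t,
          (-0.004 * (⟪θ (t - 1), x i⟫) ^ 3 + 0.197 * ⟪θ (t - 1), x i⟫ - 0.5 * y i) • x i)
    (ε : ℝ) (hε : (⨆ i, |⟪θ 0, x i⟫|) = ε) (hε2 : ε < 2) :
    ∀ t : ℕ, 1 ≤ t → (t : ℤ) ≤ ⌈Real.logb (1 + η / 4) (5.2 / (2 + ε))⌉ →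
      (∀ i, |⟪θ (t - 1), x i⟫| < 3.2) ∧
      ∀ i ∈ B t,
        Real.sign
          (-0.004 * (⟪θ (t - 1), x i⟫) ^ 3 + 0.197 * ⟪θ (t - 1), x i⟫ - 0.5 * y i) =
          -y i :=
  stmt17_general d n s x hx y hy B hB η hη θ hupd ε hε
end
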